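/- arXiv:1411.1202 — 12 statements merged into one kernel-verified Lean document; each statement's English description precedes it below -/
import Mathlib

section
/- There exists a simple graph G on ℕ such that the ordered graph (ℕ, G, ≤) is symmetrically indivisible, while the graph G itself is not symmetrically indivisible. (This answers negatively the question whether a reduct of a symmetrically indivisible structure to a sublanguage is necessarily symmetrically indivisible.) -/
/-- A graph embedding `e : G ↪g H` is symmetric if every automorphism of `G`
pushes forward along `e` to an automorphism of `H`. -/
def IsSymmetricGraphEmb {α β : Type*} {G : SimpleGraph α} {H : SimpleGraph β}
    (e : G ↪g H) : Prop :=
  ∀ g : G ≃g G, ∃ g' : H ≃g H, ∀ x, g' (e x) = e (g x)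

/-- A graph is symmetrically indivisible if every 2-coloring admits a monochromatic
symmetric self-embedding. -/
def SymIndivGraph {α : Type*} (G : SimpleGraph α) : Prop :=
  ∀ c : α → Bool, ∃ e : G ↪g G, IsSymmetricGraphEmb e ∧ ∀ x y, c (e x) = c (e y)

/-- The ordered graph `(ℕ, G, ≤)` is symmetrically indivisible. -/
def SymIndivOrderedGraph (G : SimpleGraph ℕ) : Prop :=
  ∀ c : ℕ → Bool, ∃ e : ℕ → ℕ,
    StrictMono e ∧
    (∀ x y, G.Adj (e x) (e y) ↔ G.Adj x y) ∧
    (∀ x y, c (e x) = c (e y)) ∧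
    ∀ g : Set.range e ≃ Set.range e,
      (∀ x y : Set.range e, G.Adj (g x : ℕ) (g y : ℕ) ↔ G.Adj (x : ℕ) (y : ℕ)) →
      (∀ x y : Set.range e, (g x : ℕ) ≤ (g y : ℕ) ↔ (x : ℕ) ≤ (y : ℕ)) →
      ∃ g' : ℕ ≃ ℕ,
        (∀ x y, G.Adj (g' x) (g' y) ↔ G.Adj x y) ∧
        (∀ x y, g' x ≤ g' y ↔ x ≤ y) ∧
        ∀ x : Set.range e, g' (x : ℕ) = (g x : ℕ)

/-!
The graph is the disjoint union of cliques on consecutive intervals of `ℕ` of sizes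
`1, 1, 2, 2, 3, 3, …`. Every automorphism maps each block onto a block of the same size, and
swapping the isolated vertices `0` and `1` is an automorphism. Colour a vertex by the parity of
the index of its block: a symmetric embedding `e` would need an automorphism taking `e 0` to `e 1`,
so the distinct blocks of `e 0` and `e 1` would have the same size, hence different colours.

With the order added, some colour fills more than half of infinitely many blocks, so block `k`
can be mapped increasingly into a monochromatic part of the `k`-th of a sequence of ever later
blocks. Symmetry is then free: an order-preserving permutation of a subset of `ℕ` is the identity.
-/

open Finset Filter

def SimpleGraph.isoSwapOfIsolated {V : Type*} [DecidableEq V] (G : SimpleGraph V) {a b : V}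
    (ha : ∀ x, ¬G.Adj a x) (hb : ∀ x, ¬G.Adj b x) : G ≃g G where
  toEquiv := Equiv.swap a b
  map_rel_iff' {x y} := by
    simp only [Equiv.swap_apply_def]
    split_ifs <;> simp_all [SimpleGraph.adj_comm]

lemma Equiv.eq_refl_of_le_iff {β : Type*} [LinearOrder β] [WellFoundedLT β] (g : β ≃ β)
    (hg : ∀ x y, g x ≤ g y ↔ x ≤ y) : g = Equiv.refl β :=
  congrArg RelIso.toEquiv (Subsingleton.elim (⟨g, hg _ _⟩ : β ≃o β) (OrderIso.refl β))

lemma Finset.exists_le_two_mul_card_filter {α : Type*} (s : Finset α) (c : α → Bool) :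
    ∃ t, #s ≤ 2 * #{x ∈ s | c x = t} := by
  have hsplit := card_filter_add_card_filter_not (s := s) (fun x => c x = true)
  simp only [Bool.not_eq_true] at hsplit
  by_cases h : #s ≤ 2 * #{x ∈ s | c x = true}
  exacts [⟨true, h⟩, ⟨false, by omega⟩]

namespace SymIndiv

section FiberGraph

variable {α β : Type*}

/-- The disjoint union of the cliques on the fibers of `f`. -/
def fiberGraph (f : α → β) : SimpleGraph α where
  Adj a b := a ≠ b ∧ f a = f b
  symm := ⟨fun _ _ h => ⟨h.1.symm, h.2.symm⟩⟩
  loopless := ⟨fun _ h => h.1 rfl⟩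

@[simp]
lemma fiberGraph_adj {f : α → β} {a b : α} : (fiberGraph f).Adj a b ↔ a ≠ b ∧ f a = f b :=
  Iff.rfl

lemma eq_iff_eq_or_fiberGraph_adj {f : α → β} {a b : α} :
    f a = f b ↔ a = b ∨ (fiberGraph f).Adj a b := by
  by_cases h : a = b <;> simp [h]

lemma fiberGraph_not_adj_of_fiber_subsingleton {f : α → β} {a : α} (h : ∀ b, f b = f a → b = a)
    (b : α) : ¬(fiberGraph f).Adj a b :=
  fun hab => hab.1 (h b hab.2.symm).symm

lemma fiberGraph_iso_apply_eq_iff {γ : Type*} {f : α → β} {f' : α → γ}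
    (φ : fiberGraph f ≃g fiberGraph f') {a b : α} : f' (φ a) = f' (φ b) ↔ f a = f b := by
  rw [eq_iff_eq_or_fiberGraph_adj (f := f), eq_iff_eq_or_fiberGraph_adj (f := f'),
    φ.injective.eq_iff, φ.map_adj_iff]

lemma fiberGraph_iso_card_fiber {γ : Type*} {f : α → β} {f' : α → γ}
    (φ : fiberGraph f ≃g fiberGraph f') (a : α) :
    Nat.card (f' ⁻¹' {f' (φ a)}) = Nat.card (f ⁻¹' {f a}) :=
  Nat.card_congr (φ.toEquiv.subtypeEquiv fun _ => (fiberGraph_iso_apply_eq_iff φ).symm).symm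

end FiberGraph

section Blocks

variable (L : ℕ → ℕ)

def blockStart (k : ℕ) : ℕ := ∑ i ∈ range k, L i

def block (k : ℕ) : Finset ℕ := Ico (blockStart L k) (blockStart L (k + 1))

/-- The index of the block containing `n`, for the partition of `ℕ` into consecutive intervals of
lengths `L 0, L 1, …`. -/
noncomputable def blockOf (n : ℕ) : ℕ := sInf {k | n < blockStart L (k + 1)}

variable {L}

lemma blockStart_succ (k : ℕ) : blockStart L (k + 1) = blockStart L k + L k :=
  sum_range_succ L k

lemma card_block (k : ℕ) : #(block L k) = L k := by
  rw [block, Nat.card_Ico, blockStart_succ, Nat.add_sub_cancel_left]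

variable (hL : ∀ k, 0 < L k)
include hL

lemma blockStart_strictMono : StrictMono (blockStart L) :=
  strictMono_nat_of_lt_succ fun k => by rw [blockStart_succ]; exact Nat.lt_add_of_pos_right (hL k)

lemma blockStart_le_blockOf_and_lt_blockStart_succ (n : ℕ) :
    blockStart L (blockOf L n) ≤ n ∧ n < blockStart L (blockOf L n + 1) := by
  have hne : {k | n < blockStart L (k + 1)}.Nonempty :=
    ⟨n, (blockStart_strictMono hL).le_apply.trans_lt ((blockStart_strictMono hL) n.lt_succ_self)⟩
  refine ⟨?_, Nat.sInf_mem hne⟩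
  rcases h : blockOf L n with _ | j
  · exact Nat.zero_le n
  · have hj : j < blockOf L n := h ▸ j.lt_succ_self
    exact not_lt.mp (Nat.notMem_of_lt_sInf (s := {k | n < blockStart L (k + 1)}) hj)

lemma blockOf_eq_iff {n k : ℕ} :
    blockOf L n = k ↔ blockStart L k ≤ n ∧ n < blockStart L (k + 1) := by
  have hmono := blockStart_strictMono hL
  obtain ⟨h₁, h₂⟩ := blockStart_le_blockOf_and_lt_blockStart_succ hL n
  refine ⟨fun h => h ▸ ⟨h₁, h₂⟩, fun ⟨h₃, h₄⟩ => le_antisymm ?_ ?_⟩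
  · exact Nat.lt_succ_iff.mp (hmono.lt_iff_lt.mp (h₁.trans_lt h₄))
  · exact Nat.lt_succ_iff.mp (hmono.lt_iff_lt.mp (h₃.trans_lt h₂))

lemma mem_block_iff {n k : ℕ} : n ∈ block L k ↔ blockOf L n = k := by
  rw [block, mem_Ico, blockOf_eq_iff hL]

lemma blockOf_monotone : Monotone (blockOf L) := fun a b hab => by
  obtain ⟨ha, -⟩ := blockStart_le_blockOf_and_lt_blockStart_succ hL a
  obtain ⟨-, hb⟩ := blockStart_le_blockOf_and_lt_blockStart_succ hL b
  exact Nat.lt_succ_iff.mp ((blockStart_strictMono hL).lt_iff_lt.mp (ha.trans_lt (hab.trans_lt hb)))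

lemma card_blockOf_fiber (k : ℕ) : Nat.card (blockOf L ⁻¹' {k}) = L k := by
  have : blockOf L ⁻¹' {k} = ↑(block L k) := by ext n; simp [mem_block_iff hL]
  rw [this, Nat.card_coe_set_eq, Set.ncard_coe_finset, card_block]

end Blocks

section Ordered

variable {L : ℕ → ℕ}

lemma exists_strictMono_monochromatic_subsets (hLtop : Tendsto L atTop atTop) (c : ℕ → Bool) :
    ∃ t, ∃ φ : ℕ → ℕ, StrictMono φ ∧ ∀ k, ∃ S ⊆ block L (φ k), #S = L k ∧ ∀ n ∈ S, c n = t := by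
  obtain ⟨t, ht⟩ : ∃ t, ∃ᶠ j in atTop, L j ≤ 2 * #{n ∈ block L j | c n = t} := by
    have : ∃ᶠ j in atTop, L j ≤ 2 * #{n ∈ block L j | c n = true} ∨
        L j ≤ 2 * #{n ∈ block L j | c n = false} := Frequently.of_forall fun j => by
      obtain ⟨t, ht⟩ := Finset.exists_le_two_mul_card_filter (block L j) c
      rw [card_block] at ht
      cases t <;> simp [ht]
    rcases frequently_or_distrib.mp this with h | h
    exacts [⟨true, h⟩, ⟨false, h⟩]
  obtain ⟨φ, hφ, hφL⟩ := extraction_forall_of_frequently fun k =>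
    (ht.and_eventually (hLtop.eventually_ge_atTop (2 * L k))).mono fun j hj =>
      (by omega : L k ≤ #{n ∈ block L j | c n = t})
  refine ⟨t, φ, hφ, fun k => ?_⟩
  obtain ⟨S, hS, hcard⟩ := exists_subset_card_eq (hφL k)
  exact ⟨S, hS.trans (filter_subset _ _), hcard, fun n hn => (mem_filter.mp (hS hn)).2⟩

variable (hL : ∀ k, 0 < L k)
include hL

lemma sub_blockStart_blockOf_lt (n : ℕ) : n - blockStart L (blockOf L n) < L (blockOf L n) := by
  have := blockStart_le_blockOf_and_lt_blockStart_succ hL n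
  rw [blockStart_succ] at this
  omega

/-- Sends the `i`-th element of block `k` to the `i`-th element of `S k`. -/
noncomputable def blockwiseEmb (S : ℕ → Finset ℕ) (hS : ∀ k, #(S k) = L k) (n : ℕ) : ℕ :=
  (S (blockOf L n)).orderEmbOfFin (hS _)
    ⟨n - blockStart L (blockOf L n), sub_blockStart_blockOf_lt hL n⟩

variable {S : ℕ → Finset ℕ} (hS : ∀ k, #(S k) = L k)

lemma blockwiseEmb_mem (n : ℕ) : blockwiseEmb hL S hS n ∈ S (blockOf L n) :=
  orderEmbOfFin_mem _ _ _

lemma blockwiseEmb_of_blockOf_eq {n k : ℕ} (h : blockOf L n = k) :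
    blockwiseEmb hL S hS n =
      (S k).orderEmbOfFin (hS k) ⟨n - blockStart L k, h ▸ sub_blockStart_blockOf_lt hL n⟩ := by
  subst h
  rfl

variable {φ : ℕ → ℕ} (hSφ : ∀ k, S k ⊆ block L (φ k))
include hSφ

lemma blockOf_blockwiseEmb (n : ℕ) : blockOf L (blockwiseEmb hL S hS n) = φ (blockOf L n) :=
  (mem_block_iff hL).mp (hSφ _ (blockwiseEmb_mem hL hS n))

lemma blockwiseEmb_strictMono (hφ : StrictMono φ) : StrictMono (blockwiseEmb hL S hS) := by
  intro x y hxy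
  rcases (blockOf_monotone hL hxy.le).eq_or_lt with h | h
  · have hx := (blockStart_le_blockOf_and_lt_blockStart_succ hL x).1
    rw [blockwiseEmb_of_blockOf_eq hL hS h, blockwiseEmb_of_blockOf_eq hL hS rfl]
    exact OrderEmbedding.strictMono _ (Fin.mk_lt_mk.mpr (by rw [h] at hx; omega))
  · apply (blockOf_monotone hL).reflect_lt
    rw [blockOf_blockwiseEmb hL hS hSφ, blockOf_blockwiseEmb hL hS hSφ]
    exact hφ h

end Ordered

theorem symIndivOrderedGraph_fiberGraph_blockOf {L : ℕ → ℕ} (hL : ∀ k, 0 < L k)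
    (hLtop : Tendsto L atTop atTop) : SymIndivOrderedGraph (fiberGraph (blockOf L)) := by
  intro c
  obtain ⟨t, φ, hφ, hS⟩ := exists_strictMono_monochromatic_subsets hLtop c
  choose S hSφ hcard hcolor using hS
  have he := blockwiseEmb_strictMono hL hcard hSφ hφ
  have hblock := blockOf_blockwiseEmb hL hcard hSφ
  refine ⟨blockwiseEmb hL S hcard, he, fun x y => ?_, fun x y => ?_, fun g _ hg => ?_⟩
  · simp only [fiberGraph_adj, hblock, he.injective.ne_iff, hφ.injective.eq_iff]
  · rw [hcolor _ _ (blockwiseEmb_mem hL hcard x), hcolor _ _ (blockwiseEmb_mem hL hcard y)]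
  · refine ⟨Equiv.refl ℕ, fun _ _ => Iff.rfl, fun _ _ => Iff.rfl, fun x => ?_⟩
    rw [Equiv.eq_refl_of_le_iff g hg]
    rfl

/-- Every size occurs for exactly two consecutive blocks, one of even and one of odd index. -/
def blockSize (k : ℕ) : ℕ := k / 2 + 1

lemma blockSize_pos (k : ℕ) : 0 < blockSize k := Nat.succ_pos _

lemma tendsto_blockSize : Tendsto blockSize atTop atTop :=
  tendsto_atTop_mono (fun _ => Nat.le_succ _) (Nat.tendsto_div_const_atTop two_ne_zero)

lemma blockOf_blockSize_eq_iff_of_lt_two {n k : ℕ} (hk : k < 2) :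
    blockOf blockSize n = k ↔ n = k := by
  rw [blockOf_eq_iff blockSize_pos]
  interval_cases k <;> simp only [blockStart, blockSize, sum_range_succ, sum_range_zero] <;> omega

theorem not_symIndivGraph_fiberGraph_blockOf_blockSize :
    ¬SymIndivGraph (fiberGraph (blockOf blockSize)) := by
  have hisolated {a : ℕ} (ha : a < 2) : ∀ x, ¬(fiberGraph (blockOf blockSize)).Adj a x :=
    fiberGraph_not_adj_of_fiber_subsingleton fun b hb => by
      rwa [(blockOf_blockSize_eq_iff_of_lt_two ha).mpr rfl,
        blockOf_blockSize_eq_iff_of_lt_two ha] at hb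
  intro h
  obtain ⟨e, he, hcolor⟩ := h fun n => decide (Even (blockOf blockSize n))
  obtain ⟨φ, hφ⟩ :=
    he (SimpleGraph.isoSwapOfIsolated _ (hisolated zero_lt_two) (hisolated one_lt_two))
  have hφ0 : φ (e 0) = e 1 := hφ 0
  have hne : blockOf blockSize (e 0) ≠ blockOf blockSize (e 1) := fun h =>
    hisolated zero_lt_two 1 (e.map_adj_iff.mp ⟨e.injective.ne zero_ne_one, h⟩)
  have hsize : blockSize (blockOf blockSize (e 1)) = blockSize (blockOf blockSize (e 0)) := by
    rw [← card_blockOf_fiber blockSize_pos, ← card_blockOf_fiber blockSize_pos, ← hφ0,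
      fiberGraph_iso_card_fiber]
  have hparity := hcolor 0 1
  simp only [decide_eq_decide, Nat.even_iff] at hparity
  simp only [blockSize] at hsize
  omega

end SymIndiv

theorem exists_orderedSymIndiv_graph_reduct_not_symIndiv :
    ∃ G : SimpleGraph ℕ, SymIndivOrderedGraph G ∧ ¬ SymIndivGraph G :=
  ⟨SymIndiv.fiberGraph (SymIndiv.blockOf SymIndiv.blockSize),
    SymIndiv.symIndivOrderedGraph_fiberGraph_blockOf SymIndiv.blockSize_pos
      SymIndiv.tendsto_blockSize,
    SymIndiv.not_symIndivGraph_fiberGraph_blockOf_blockSize⟩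
end

section
/- There is a function F : SimpleGraph ℕ → SimpleGraph ℕ such that (i) for every graph G on ℕ, F G is symmetrically indivisible, and (ii) for all graphs G, H on ℕ, if F G is isomorphic to F H then G is isomorphic to H. In particular there are 2^ℵ0 pairwise non-isomorphic symmetrically indivisible countable graphs. -/
/-!
For `T ⊆ ℕ` take countably many disjoint copies of the complete graph `K_{n+1}` for every
`n ∈ T`. The degree set of this graph is `T`, so coding the edge set of `G` into an unbounded
set `T` gives a map that is injective up to isomorphism.

If `T` is unbounded, the graph is symmetrically indivisible. Given a 2-colouring, pigeonhole in
large blocks yields a colour such that for every `n` there are arbitrarily large sizes in `T`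
with infinitely many blocks of that size containing `n + 1` points of this colour. Sending each
block injectively into its own such host block, with the host size depending only on the block
size, gives a monochromatic embedding `e`. An automorphism `g` permutes the blocks preserving
their sizes; transport this permutation to the host blocks and extend it block by block (blocks
are finite sets of equal size) to an automorphism `ĝ` with `ĝ ∘ e = e ∘ g`.
-/

open Function Filter

section ClusterGraph

variable {V W β β' A : Type*}

def clusterGraph (f : V → β) : SimpleGraph V where
  Adj x y := x ≠ y ∧ f x = f y
  symm := ⟨fun _ _ h => ⟨h.1.symm, h.2.symm⟩⟩
  loopless := ⟨fun _ h => h.1 rfl⟩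

@[simp]
lemma clusterGraph_adj {f : V → β} {x y : V} :
    (clusterGraph f).Adj x y ↔ x ≠ y ∧ f x = f y := Iff.rfl

lemma eq_or_clusterGraph_adj {f : V → β} {x y : V} :
    x = y ∨ (clusterGraph f).Adj x y ↔ f x = f y := by
  by_cases h : x = y <;> simp [h]

lemma apply_iso_eq_apply_iso_iff {f : V → β} {f' : W → β'}
    (φ : clusterGraph f ≃g clusterGraph f') {x y : V} : f' (φ x) = f' (φ y) ↔ f x = f y := by
  rw [← eq_or_clusterGraph_adj, ← eq_or_clusterGraph_adj (f := f), φ.map_adj_iff,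
    φ.apply_eq_iff_eq]

def clusterGraphEmbedding {f : V → β} {f' : W → β'} (e : V ↪ W) (H : β ↪ β')
    (he : ∀ x, f' (e x) = H (f x)) : clusterGraph f ↪g clusterGraph f' where
  toEmbedding := e
  map_rel_iff' := by simp [he, e.apply_eq_iff_eq]

def clusterGraphIso {f : V → β} {f' : W → β'} (π : V ≃ W) (γ : β ≃ β')
    (hπ : ∀ x, f' (π x) = γ (f x)) : clusterGraph f ≃g clusterGraph f' where
  toEquiv := π
  map_rel_iff' := by simp [hπ, π.apply_eq_iff_eq]

lemma card_neighborSet_clusterGraph_add_one {f : V → β} (v : V) [Finite {x // f x = f v}] :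
    Nat.card ((clusterGraph f).neighborSet v) + 1 = Nat.card {x // f x = f v} := by
  have : (clusterGraph f).neighborSet v = {x | f x = f v} \ {v} := by
    ext x
    simp [eq_comm, and_comm]
  rw [this, Nat.card_coe_set_eq, Set.ncard_sdiff_singleton_add_one
    (show v ∈ {x | f x = f v} from rfl) (Set.finite_coe_iff.mp ‹_›), ← Nat.card_coe_set_eq]
  rfl

lemma exists_perm_apply_eq_of_fiber_iff {f : V → β} (g : V ≃ V)
    (hg : ∀ x y, f (g x) = f (g y) ↔ f x = f y) :
    ∃ γ : Equiv.Perm β, ∀ x, f (g x) = γ (f x) := by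
  let q := Setoid.quotientKerEquivRange f
  let γ₀ : Set.range f ≃ Set.range f :=
    q.symm.trans ((Quotient.congr g fun x y => by simp [Setoid.ker_def, hg]).trans q)
  have hq (y : V) : q ⟦y⟧ = ⟨f y, y, rfl⟩ := Subtype.ext rfl
  have hγ₀ (x : V) : γ₀ ⟨f x, x, rfl⟩ = ⟨f (g x), g x, rfl⟩ := by
    rw [← hq, ← hq]
    simp [γ₀]
  refine ⟨Equiv.Perm.viaEmbedding γ₀ (Embedding.subtype _), fun x => ?_⟩
  rw [show f x = Embedding.subtype _ (⟨f x, x, rfl⟩ : Set.range f) from rfl,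
    Equiv.Perm.viaEmbedding_apply, hγ₀]
  rfl

lemma card_fiber_of_semiconj {f : V → β} {g : V ≃ V} {γ : Equiv.Perm β}
    (h : ∀ x, f (g x) = γ (f x)) (b : β) :
    Nat.card {x // f x = γ b} = Nat.card {x // f x = b} :=
  (Nat.card_congr (g.subtypeEquiv fun x => by rw [h, γ.apply_eq_iff_eq])).symm

lemma exists_equiv_extend_embedding {X Y : Type*} [Finite X] [Finite Y]
    (hXY : Nat.card X = Nat.card Y) (u : A ↪ X) (w : A ↪ Y) :
    ∃ π : X ≃ Y, ∀ a, π (u a) = w a := by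
  obtain ⟨π, hπ⟩ := Cardinal.extend_function_finite
    ((Equiv.ofInjective u u.injective).symm.toEmbedding.trans w) (Finite.card_eq.mp hXY)
  exact ⟨π, fun a => by simpa using hπ ⟨u a, a, rfl⟩⟩

lemma exists_perm_fiberwise_extend {f : V → β} [∀ b, Finite {x // f x = b}]
    (γ : Equiv.Perm β) (hγ : ∀ b, Nat.card {x // f x = γ b} = Nat.card {x // f x = b})
    (φ ψ : A ↪ V) (h : ∀ a, f (ψ a) = γ (f (φ a))) :
    ∃ π : Equiv.Perm V, (∀ x, f (π x) = γ (f x)) ∧ ∀ a, π (φ a) = ψ a := by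
  have hext (b : β) : ∃ π : {x // f x = b} ≃ {x // f x = γ b},
      ∀ a : {a // f (φ a) = b}, π ⟨φ a, a.2⟩ = ⟨ψ a, by rw [h, a.2]⟩ :=
    exists_equiv_extend_embedding (hγ b).symm (φ.subtypeMap fun _ ha => ha)
      (ψ.subtypeMap fun _ ha => by rw [h, ha])
  choose π hπ using hext
  exact ⟨(Equiv.sigmaFiberEquiv f).symm.trans ((Equiv.sigmaCongr γ π).trans
    (Equiv.sigmaFiberEquiv f)), fun x => (π _ _).2,
    fun a => congrArg Subtype.val (hπ _ ⟨a, rfl⟩)⟩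

theorem isSymmetricGraphEmb_of_apply_fiber {f : V → β} [∀ b, Finite {x // f x = b}]
    (H : β ↪ β) (hH : ∀ b b', Nat.card {x // f x = b} = Nat.card {x // f x = b'} →
      Nat.card {x // f x = H b} = Nat.card {x // f x = H b'})
    (e : clusterGraph f ↪g clusterGraph f) (he : ∀ x, f (e x) = H (f x)) :
    IsSymmetricGraphEmb e := by
  intro g
  obtain ⟨γ, hγ⟩ := exists_perm_apply_eq_of_fiber_iff g.toEquiv fun _ _ =>
    apply_iso_eq_apply_iso_iff g
  -- `γ` moves the blocks as `g` does; `γ.viaEmbedding H` moves the host blocks accordingly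
  have hcard (b : β) : Nat.card {x // f x = γ.viaEmbedding H b} = Nat.card {x // f x = b} := by
    by_cases hb : b ∈ Set.range H
    · obtain ⟨b, rfl⟩ := hb
      rw [Equiv.Perm.viaEmbedding_apply]
      exact hH _ _ (card_fiber_of_semiconj hγ b)
    · rw [Equiv.Perm.viaEmbedding_apply_of_notMem _ _ _ hb]
  obtain ⟨π, hπf, hπe⟩ := exists_perm_fiberwise_extend _ hcard e.toEmbedding
    (g.toEquiv.toEmbedding.trans e.toEmbedding) fun x => by
      simpa [he, Equiv.Perm.viaEmbedding_apply] using hγ x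
  exact ⟨clusterGraphIso π _ hπf, hπe⟩

lemma exists_embedding_apply_fiber_monochromatic {f : V → β} [∀ b, Finite {x // f x = b}]
    (H : β ↪ β) (c : V → Bool) (col : Bool)
    (hcap : ∀ b, Nat.card {x // f x = b} ≤ Nat.card {y : {x // f x = H b} // c y = col}) :
    ∃ e : clusterGraph f ↪g clusterGraph f,
      (∀ x, f (e x) = H (f x)) ∧ ∀ x, c (e x) = col := by
  have hι (b : β) : Nonempty ({x // f x = b} ↪ {y : {x // f x = H b} // c y = col}) := by
    have := Fintype.ofFinite {x // f x = b}
    have := Fintype.ofFinite {y : {x // f x = H b} // c y = col}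
    exact Embedding.nonempty_of_card_le (by simpa only [Nat.card_eq_fintype_card] using hcap b)
  let ι b := (hι b).some
  let e : V ↪ V := (Equiv.sigmaFiberEquiv f).symm.toEmbedding.trans
    ((Embedding.sigmaMap H fun b => (ι b).trans (Embedding.subtype _)).trans
      (Equiv.sigmaFiberEquiv f).toEmbedding)
  have he (x : V) : f (e x) = H (f x) := (ι (f x) ⟨x, rfl⟩).1.2
  exact ⟨clusterGraphEmbedding e H he, he, fun x => (ι (f x) ⟨x, rfl⟩).2⟩

theorem symmIndivGraph_clusterGraph {f : V → β} [∀ b, Finite {x // f x = b}]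
    (h : ∀ c : V → Bool, ∃ (col : Bool) (H : β ↪ β),
      (∀ b b', Nat.card {x // f x = b} = Nat.card {x // f x = b'} →
        Nat.card {x // f x = H b} = Nat.card {x // f x = H b'}) ∧
      ∀ b, Nat.card {x // f x = b} ≤ Nat.card {y : {x // f x = H b} // c y = col}) :
    SymIndivGraph (clusterGraph f) := by
  intro c
  obtain ⟨col, H, hH, hcap⟩ := h c
  obtain ⟨e, he, hc⟩ := exists_embedding_apply_fiber_monochromatic H c col hcap
  exact ⟨e, isSymmetricGraphEmb_of_apply_fiber H hH e he, fun x y => by rw [hc, hc]⟩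

end ClusterGraph

theorem SymIndivGraph.of_iso {V W : Type*} {G : SimpleGraph V} {G' : SimpleGraph W}
    (hG : SymIndivGraph G) (φ : G ≃g G') : SymIndivGraph G' := by
  intro c
  obtain ⟨e, he, hc⟩ := hG (c ∘ φ)
  refine ⟨φ.symm.toEmbedding.trans (e.trans φ.toEmbedding), fun g => ?_, fun x y => hc _ _⟩
  obtain ⟨g', hg'⟩ := he (φ.trans (g.trans φ.symm))
  exact ⟨φ.symm.trans (g'.trans φ), fun x => by simp [hg']⟩

instance finite_sigma_fiber {β : Type*} (s : β → ℕ) (b : β) :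
    Finite {x : Σ b, Fin (s b) // x.1 = b} :=
  Finite.of_equiv _ (Equiv.sigmaSubtype b).symm

lemma card_sigma_fiber {β : Type*} (s : β → ℕ) (b : β) :
    Nat.card {x : Σ b, Fin (s b) // x.1 = b} = s b := by
  rw [Nat.card_congr (Equiv.sigmaSubtype b), Nat.card_eq_fintype_card, Fintype.card_fin]

lemma card_true_add_card_false {X : Type*} [Finite X] (c : X → Bool) :
    Nat.card {x // c x = true} + Nat.card {x // c x = false} = Nat.card X := by
  rw [← Nat.card_sum, Nat.card_congr ((Equiv.sumCongr (Equiv.refl _)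
    (Equiv.subtypeEquivRight fun x => by simp)).trans (Equiv.sumCompl fun x => c x = true))]

section CliqueUnion

abbrev CliqueUnionVert (T : Set ℕ) := Σ b : T × ℕ, Fin (b.1 + 1)

/-- The block `(n, i)` is the `i`-th copy of `K_{n+1}`, so `n` is the degree of its vertices. -/
def cliqueUnion (T : Set ℕ) : SimpleGraph (CliqueUnionVert T) := clusterGraph Sigma.fst

variable {T : Set ℕ}

lemma exists_color_frequently_infinite (hT : ∀ K, ∃ m ∈ T, K ≤ m)
    (c : CliqueUnionVert T → Bool) :
    ∃ col : Bool, ∀ n, ∃ᶠ m in atTop, ∃ hm : m ∈ T,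
      {i | n ≤ Nat.card {y : {x : CliqueUnionVert T // x.1 = (⟨m, hm⟩, i)} //
        c y = col}}.Infinite := by
  by_contra! h
  choose n hn using h
  obtain ⟨K, hK⟩ := eventually_atTop.mp ((hn true).and (hn false))
  obtain ⟨m, hm, hKm⟩ := hT (K + n true + n false)
  refine Set.infinite_univ (α := ℕ) (((hK m (by omega)).1 hm |>.union
    ((hK m (by omega)).2 hm)).subset fun i _ => ?_)
  have : Nat.card {y : {x : CliqueUnionVert T // x.1 = (⟨m, hm⟩, i)} // c y = true} +
      Nat.card {y : {x : CliqueUnionVert T // x.1 = (⟨m, hm⟩, i)} // c y = false} = m + 1 := by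
    rw [card_true_add_card_false, card_sigma_fiber]
  simp only [Set.mem_union, Set.mem_ofPred_eq]
  omega

theorem symmIndivGraph_cliqueUnion (hT : ∀ K, ∃ m ∈ T, K ≤ m) :
    SymIndivGraph (cliqueUnion T) := by
  refine symmIndivGraph_clusterGraph fun c => ?_
  obtain ⟨col, hcol⟩ := exists_color_frequently_infinite hT c
  obtain ⟨M, hM, hMT⟩ := extraction_forall_of_frequently fun n => hcol (n + 1)
  choose hMT hhost using hMT
  let H : T × ℕ ↪ T × ℕ :=
    ⟨fun b => (⟨M b.1, hMT b.1⟩, (hhost b.1).natEmbedding _ b.2), by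
      rintro ⟨⟨n, hn⟩, i⟩ ⟨⟨n', hn'⟩, i'⟩ h
      simp only [Prod.mk.injEq, Subtype.mk.injEq] at h
      obtain rfl := hM.injective h.1
      simpa using ((hhost n).natEmbedding _).injective (Subtype.ext h.2)⟩
  refine ⟨col, H, fun b b' h => ?_, fun b => ?_⟩
  · simp only [card_sigma_fiber] at h ⊢
    change M b.1 + 1 = M b'.1 + 1
    rw [Nat.add_right_cancel h]
  · rw [card_sigma_fiber]
    exact ((hhost b.1).natEmbedding _ b.2).2

lemma exists_card_neighborSet_cliqueUnion_iff {n : ℕ} :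
    (∃ v, Nat.card ((cliqueUnion T).neighborSet v) = n) ↔ n ∈ T := by
  have hcard (v : CliqueUnionVert T) : Nat.card ((cliqueUnion T).neighborSet v) = v.1.1 := by
    have := card_neighborSet_clusterGraph_add_one (f := Sigma.fst) v
    rw [card_sigma_fiber] at this
    exact Nat.add_right_cancel this
  simp only [hcard]
  exact ⟨fun ⟨v, hv⟩ => hv ▸ v.1.1.2, fun hn => ⟨⟨(⟨n, hn⟩, 0), 0⟩, rfl⟩⟩

lemma eq_of_iso_cliqueUnion {T T' : Set ℕ} (φ : cliqueUnion T ≃g cliqueUnion T') : T = T' := by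
  ext n
  rw [← exists_card_neighborSet_cliqueUnion_iff, ← exists_card_neighborSet_cliqueUnion_iff]
  exact ⟨fun ⟨v, hv⟩ => ⟨φ v, (Nat.card_congr (φ.mapNeighborSet v)).symm.trans hv⟩,
    fun ⟨w, hw⟩ => ⟨φ.symm w, (Nat.card_congr (φ.symm.mapNeighborSet w)).symm.trans hw⟩⟩

lemma infinite_cliqueUnionVert (hT : T.Nonempty) : Infinite (CliqueUnionVert T) :=
  Infinite.of_injective (fun i => ⟨(⟨hT.some, hT.some_mem⟩, i), 0⟩) fun i j h => by
    simpa using congrArg (fun x => x.1.2) h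

end CliqueUnion

/-- Even numbers make the set unbounded; the odd number `2 * Nat.pair i j + 1` records the edge
`i j`. -/
def adjCode (G : SimpleGraph ℕ) : Set ℕ :=
  {m | Even m} ∪ {m | ∃ i j, G.Adj i j ∧ m = 2 * Nat.pair i j + 1}

lemma adj_iff_mem_adjCode {G : SimpleGraph ℕ} {i j : ℕ} :
    G.Adj i j ↔ 2 * Nat.pair i j + 1 ∈ adjCode G := by
  refine ⟨fun h => Or.inr ⟨i, j, h, rfl⟩, ?_⟩
  rintro (h | ⟨i', j', h, hij⟩)
  · exact absurd h (by simp)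
  · obtain ⟨rfl, rfl⟩ := Nat.pair_eq_pair.mp (by omega : Nat.pair i' j' = Nat.pair i j)
    exact h

lemma adjCode_injective : Injective adjCode := by
  intro G H h
  ext i j
  rw [adj_iff_mem_adjCode, h, ← adj_iff_mem_adjCode]

lemma exists_mem_adjCode_ge (G : SimpleGraph ℕ) (K : ℕ) : ∃ m ∈ adjCode G, K ≤ m :=
  ⟨2 * K, Or.inl (even_two_mul K), by omega⟩

theorem exists_injective_map_to_symIndiv_graphs :
    ∃ F : SimpleGraph ℕ → SimpleGraph ℕ,
      (∀ G : SimpleGraph ℕ, SymIndivGraph (F G)) ∧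
      ∀ G H : SimpleGraph ℕ, Nonempty (F G ≃g F H) → Nonempty (G ≃g H) := by
  let toNat (G : SimpleGraph ℕ) : CliqueUnionVert (adjCode G) ≃ ℕ :=
    have := infinite_cliqueUnionVert (T := adjCode G) ⟨0, Or.inl ⟨0, rfl⟩⟩
    Classical.ofNonempty
  refine ⟨fun G => (cliqueUnion (adjCode G)).map (toNat G).toEmbedding, fun G => ?_,
    fun G H ⟨φ⟩ => ?_⟩
  · exact (symmIndivGraph_cliqueUnion (exists_mem_adjCode_ge G)).of_iso (.map _ _)
  · rw [adjCode_injective (eq_of_iso_cliqueUnion ((SimpleGraph.Iso.map _ _).trans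
      (φ.trans (SimpleGraph.Iso.map _ _).symm)))]
    exact ⟨.refl⟩
end

section
/- There is a function F assigning to each linear order r on ℕ a linear order F r on ℕ such that (i) for every r, the linear order F r is symmetrically indivisible, and (ii) for all r, s, if F r is order isomorphic to F s then r is order isomorphic to s. In particular there are 2^ℵ0 pairwise non-isomorphic symmetrically indivisible countably infinite linear orders. -/
/-- A relational embedding is symmetric if every automorphism of the source pushes
forward along it to an automorphism of the target. -/
def IsSymmetricRelEmb {α β : Type*} {r : α → α → Prop} {s : β → β → Prop}
    (e : r ↪r s) : Prop :=
  ∀ g : r ≃r r, ∃ g' : s ≃r s, ∀ x, g' (e x) = e (g x)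

/-- A linear order (given as a relation) is symmetrically indivisible if every
2-coloring admits a monochromatic symmetric self-embedding. -/
def SymIndivRel {α : Type*} (r : α → α → Prop) : Prop :=
  ∀ c : α → Bool, ∃ e : r ↪r r, IsSymmetricRelEmb e ∧ ∀ x y, c (e x) = c (e y)

/-!
Replace each point `a` of the linear order `r` by a copy of `ℚ`, and each rational `q` of that
copy by a finite block of `encode (a, q) + 1` points. Two points of the resulting countable order
lie in the same block iff only finitely many points lie between them, so an isomorphism maps
blocks onto blocks of the same size. Block sizes are pairwise distinct, hence such an isomorphism
is the identity: the order is rigid, which makes every self-embedding symmetric, and an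
isomorphism between the orders built from `r` and from `s` forces `r = s`.

Indivisibility comes from a copy of `ℚ`: for a 2-colouring of `ℚ`, either `true` is dense
everywhere or `false` fills an open interval, and in both cases one colour class contains a
copy of every countable linear order.
-/

open Set

section SymIndiv

variable {α β : Type*}

theorem IsSymmetricRelEmb.of_subsingleton {r : α → α → Prop} {s : β → β → Prop}
    [Subsingleton (r ≃r r)] (e : r ↪r s) : IsSymmetricRelEmb e :=
  fun g => ⟨RelIso.refl s, fun x => by rw [Subsingleton.elim g (RelIso.refl r)]; rfl⟩

theorem SymIndivRel.of_relIso {r : α → α → Prop} {s : β → β → Prop} (f : r ≃r s)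
    (h : SymIndivRel s) : SymIndivRel r := by
  intro c
  obtain ⟨e, he, hc⟩ := h (c ∘ f.symm)
  refine ⟨(f.toRelEmbedding.trans e).trans f.symm.toRelEmbedding, fun g => ?_,
    fun x y => hc (f x) (f y)⟩
  obtain ⟨g', hg'⟩ := he (f.symm.trans (g.trans f))
  exact ⟨f.trans (g'.trans f.symm), fun x => by simp [hg']⟩

end SymIndiv

theorem Rat.exists_orderEmbedding_monochromatic (β : Type*) [LinearOrder β] [Countable β]
    (c : ℚ → Bool) : ∃ (e : β ↪o ℚ) (b : Bool), ∀ x, c (e x) = b := by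
  suffices ∃ (S : Set ℚ) (b : Bool), DenselyOrdered S ∧ S.Nontrivial ∧ ∀ q ∈ S, c q = b by
    obtain ⟨S, b, _, hS, hc⟩ := this
    have := nontrivial_coe_sort.2 hS
    obtain ⟨e⟩ := Order.embedding_from_countable_to_dense (α := β) (β := S)
    exact ⟨e.trans (OrderEmbedding.subtype _), b, fun x => hc _ (e x).2⟩
  by_cases H : ∀ x y : ℚ, x < y → ∃ z, x < z ∧ z < y ∧ c z = true
  · refine ⟨{q | c q = true}, true, ⟨fun x y h => ?_⟩, ?_, fun q hq => hq⟩
    · obtain ⟨z, h1, h2, hz⟩ := H x y h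
      exact ⟨⟨z, hz⟩, h1, h2⟩
    · obtain ⟨z, -, h1, hz⟩ := H 0 1 one_pos
      obtain ⟨w, h2, -, hw⟩ := H z 1 h1
      exact ⟨z, hz, w, hw, h2.ne⟩
  · push Not at H
    obtain ⟨x, y, hxy, H⟩ := H
    exact ⟨Ioo x y, false, inferInstance, (Ioo_infinite hxy).nontrivial,
      fun q hq => by simpa using H q hq.1 hq.2⟩

theorem symIndivRel_of_subsingleton_orderIso {α : Type*} [LinearOrder α] [Countable α]
    [Subsingleton (α ≃o α)] (ι : ℚ ↪o α) : SymIndivRel ((· ≤ ·) : α → α → Prop) := by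
  intro c
  obtain ⟨e, b, he⟩ := Rat.exists_orderEmbedding_monochromatic α (c ∘ ι)
  exact ⟨e.trans ι, .of_subsingleton _, fun x y => (he x).trans (he y).symm⟩

namespace Sigma.Lex

variable {ι : Type*} {α : ι → Type*}

theorem fst_le_fst [Preorder ι] [∀ i, LE (α i)] {x y : Σₗ i, α i} (h : x ≤ y) :
    (ofLex x).1 ≤ (ofLex y).1 :=
  (le_def.1 h).elim le_of_lt fun ⟨h, _⟩ => h.le

theorem toLex_mk_lt_toLex_mk [Preorder ι] [∀ i, LT (α i)] {i : ι} {a b : α i} :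
    toLex (⟨i, a⟩ : Σ i, α i) < toLex ⟨i, b⟩ ↔ a < b :=
  ⟨fun h => (lt_def.1 h).elim (fun h => absurd h (lt_irrefl i)) fun ⟨_, h⟩ => h,
    fun h => Sigma.Lex.right _ _ h⟩

section FinBlocks

variable {I : Type*} {n : I → ℕ}

theorem setOf_fst_eq_eq_range (i : I) :
    {z : Σₗ i, Fin (n i + 1) | (ofLex z).1 = i} = range fun k => toLex ⟨i, k⟩ := by
  ext ⟨j, k⟩
  constructor
  · rintro rfl; exact ⟨k, rfl⟩
  · rintro ⟨l, h⟩; cases h; rfl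

theorem finite_setOf_fst_eq (i : I) : {z : Σₗ i, Fin (n i + 1) | (ofLex z).1 = i}.Finite := by
  rw [setOf_fst_eq_eq_range]
  exact finite_range _

theorem ncard_setOf_fst_eq (i : I) :
    {z : Σₗ i, Fin (n i + 1) | (ofLex z).1 = i}.ncard = n i + 1 := by
  rw [setOf_fst_eq_eq_range, ncard_range_of_injective (fun k l h => by simpa using h),
    Nat.card_fin]

theorem ncard_setOf_fst_eq_and_lt [Preorder I] (x : Σₗ i, Fin (n i + 1)) :
    {z | (ofLex z).1 = (ofLex x).1 ∧ z < x}.ncard = (ofLex x).2 := by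
  obtain ⟨i, k⟩ := x
  have : {z : Σₗ i, Fin (n i + 1) | (ofLex z).1 = i ∧ z < toLex ⟨i, k⟩} =
      (fun l => toLex ⟨i, l⟩) '' Iio k := by
    ext ⟨j, l⟩
    constructor
    · rintro ⟨rfl, h⟩
      exact ⟨l, toLex_mk_lt_toLex_mk.1 h, rfl⟩
    · rintro ⟨l, hl, h⟩
      cases h
      exact ⟨rfl, toLex_mk_lt_toLex_mk.2 hl⟩
  change {z : Σₗ i, Fin (n i + 1) | (ofLex z).1 = i ∧ z < toLex ⟨i, k⟩}.ncard = k
  rw [this, ncard_image_of_injective _ (fun k l h => by simpa using h), ← Finset.coe_Iio,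
    ncard_coe_finset, Fin.card_Iio]

variable [LinearOrder I]

def mkZeroEmbedding (n : I → ℕ) : I ↪o Σₗ i, Fin (n i + 1) :=
  OrderEmbedding.ofStrictMono (fun i => toLex ⟨i, 0⟩) fun _ _ h => Sigma.Lex.left _ _ h

variable [DenselyOrdered I]

theorem finite_Icc_iff_fst_eq {x y : Σₗ i, Fin (n i + 1)} (hxy : x ≤ y) :
    (Icc x y).Finite ↔ (ofLex x).1 = (ofLex y).1 := by
  refine ⟨fun hfin => ?_, fun h => ?_⟩
  · by_contra hne
    have hlt : (ofLex x).1 < (ofLex y).1 := (fst_le_fst hxy).lt_of_ne hne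
    refine ((Ioo_infinite hlt).image (mkZeroEmbedding n).injective.injOn).mono ?_ hfin
    rintro _ ⟨i, hi, rfl⟩
    exact ⟨Sigma.Lex.left _ _ hi.1, Sigma.Lex.left _ _ hi.2⟩
  · refine (finite_setOf_fst_eq (ofLex x).1).subset fun z hz => ?_
    exact le_antisymm (h ▸ fst_le_fst hz.2) (fst_le_fst hz.1)

end FinBlocks

end Sigma.Lex

namespace OrderIso

open Sigma.Lex

variable {I J : Type*} [LinearOrder I] [DenselyOrdered I] [LinearOrder J] [DenselyOrdered J]
  {n : I → ℕ} {m : J → ℕ}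

section

variable (φ : (Σₗ i, Fin (n i + 1)) ≃o (Σₗ j, Fin (m j + 1)))

theorem fst_apply_eq_fst_apply_iff {x y : Σₗ i, Fin (n i + 1)} :
    (ofLex (φ x)).1 = (ofLex (φ y)).1 ↔ (ofLex x).1 = (ofLex y).1 := by
  wlog hxy : x ≤ y generalizing x y
  · exact eq_comm.trans ((this (le_of_not_ge hxy)).trans eq_comm)
  rw [← finite_Icc_iff_fst_eq hxy, ← finite_Icc_iff_fst_eq (φ.monotone hxy), ← φ.image_Icc,
    finite_image_iff φ.injective.injOn]

theorem image_setOf_fst_eq (x : Σₗ i, Fin (n i + 1)) :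
    φ '' {z | (ofLex z).1 = (ofLex x).1} = {z | (ofLex z).1 = (ofLex (φ x)).1} := by
  ext w
  rw [φ.image_eq_preimage_symm, mem_preimage, mem_ofPred_eq, mem_ofPred_eq,
    ← φ.fst_apply_eq_fst_apply_iff, φ.apply_symm_apply]

theorem image_setOf_fst_eq_and_lt (x : Σₗ i, Fin (n i + 1)) :
    φ '' {z | (ofLex z).1 = (ofLex x).1 ∧ z < x} =
      {z | (ofLex z).1 = (ofLex (φ x)).1 ∧ z < φ x} := by
  ext w
  rw [φ.image_eq_preimage_symm, mem_preimage, mem_ofPred_eq, mem_ofPred_eq,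
    ← φ.fst_apply_eq_fst_apply_iff, φ.apply_symm_apply, φ.symm_apply_lt]

theorem size_fst_apply (x : Σₗ i, Fin (n i + 1)) : m (ofLex (φ x)).1 = n (ofLex x).1 := by
  have h := ncard_image_of_injective {z | (ofLex z).1 = (ofLex x).1} φ.injective
  rw [image_setOf_fst_eq, ncard_setOf_fst_eq, ncard_setOf_fst_eq] at h
  omega

theorem val_snd_apply (x : Σₗ i, Fin (n i + 1)) : ((ofLex (φ x)).2 : ℕ) = (ofLex x).2 := by
  have h := ncard_image_of_injective {z | (ofLex z).1 = (ofLex x).1 ∧ z < x} φ.injective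
  rwa [image_setOf_fst_eq_and_lt, ncard_setOf_fst_eq_and_lt, ncard_setOf_fst_eq_and_lt] at h

end

theorem apply_eq_self_of_injective (hn : Function.Injective n)
    (φ : (Σₗ i, Fin (n i + 1)) ≃o (Σₗ i, Fin (n i + 1))) (x : Σₗ i, Fin (n i + 1)) :
    φ x = x := by
  have hfst := hn (φ.size_fst_apply x)
  have hsnd := φ.val_snd_apply x
  generalize φ x = y at hfst hsnd
  obtain ⟨i, k⟩ := x
  obtain ⟨j, l⟩ := y
  cases hfst
  exact congrArg (fun l => toLex (⟨i, l⟩ : Σ i, Fin (n i + 1))) (Fin.ext hsnd)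

theorem subsingleton_of_injective (hn : Function.Injective n) :
    Subsingleton ((Σₗ i, Fin (n i + 1)) ≃o (Σₗ i, Fin (n i + 1))) :=
  ⟨fun φ ψ => OrderIso.ext <| funext fun x => by
    rw [φ.apply_eq_self_of_injective hn, ψ.apply_eq_self_of_injective hn]⟩

end OrderIso

def WithRel {α : Type*} (_ : α → α → Prop) : Type _ := α

namespace WithRel

variable {α : Type*} {r : α → α → Prop}

noncomputable instance [h : Fact (IsLinearOrder α r)] : LinearOrder (WithRel r) where
  le := r
  le_refl := h.out.refl
  le_trans _ _ _ := h.out.trans _ _ _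
  le_antisymm _ _ := h.out.antisymm _ _
  le_total := h.out.total
  toDecidableLE := Classical.decRel _

instance [Countable α] : Countable (WithRel r) := ‹Countable α›

end WithRel

def blockSize (r : ℕ → ℕ → Prop) (i : WithRel r ×ₗ ℚ) : ℕ := Encodable.encode (ofLex i : ℕ × ℚ)

theorem blockSize_injective (r : ℕ → ℕ → Prop) : Function.Injective (blockSize r) :=
  fun i j h => ofLex.injective (Encodable.encode_injective h : (ofLex i : ℕ × ℚ) = ofLex j)

abbrev BlockOrder (r : ℕ → ℕ → Prop) : Type :=
  Σₗ i : WithRel r ×ₗ ℚ, Fin (blockSize r i + 1)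

namespace BlockOrder

instance (r : ℕ → ℕ → Prop) : Countable (BlockOrder r) :=
  inferInstanceAs (Countable (Σ i : WithRel r × ℚ, Fin (blockSize r i + 1)))

instance (r : ℕ → ℕ → Prop) : Infinite (BlockOrder r) :=
  Infinite.of_injective (fun q : ℚ => (toLex ⟨toLex ((0 : ℕ), q), 0⟩ : BlockOrder r))
    fun _ _ h => congrArg (fun z : BlockOrder r => (ofLex (ofLex z).1).2) h

noncomputable def equivNat (r : ℕ → ℕ → Prop) : ℕ ≃ BlockOrder r :=
  nonempty_equiv_of_countable.some

noncomputable def ratEmbedding (r : ℕ → ℕ → Prop) [Fact (IsLinearOrder ℕ r)] :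
    ℚ ↪o BlockOrder r :=
  (OrderEmbedding.ofStrictMono (fun q => (toLex ((0 : ℕ), q) : WithRel r ×ₗ ℚ))
    fun _ _ h => Prod.Lex.toLex_lt_toLex.2 (Or.inr ⟨rfl, h⟩)).trans
    (Sigma.Lex.mkZeroEmbedding _)

variable {r s : ℕ → ℕ → Prop} [Fact (IsLinearOrder ℕ r)] [Fact (IsLinearOrder ℕ s)]

theorem symIndivRel : SymIndivRel ((· ≤ ·) : BlockOrder r → BlockOrder r → Prop) :=
  haveI := OrderIso.subsingleton_of_injective (blockSize_injective r)
  symIndivRel_of_subsingleton_orderIso (ratEmbedding r)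

theorem rel_of_orderIso (φ : BlockOrder r ≃o BlockOrder s) {a b : ℕ} (hab : r a b) : s a b := by
  let x : ℕ → BlockOrder r := fun c => Sigma.Lex.mkZeroEmbedding _ (toLex (c, 0))
  have hfst : ∀ c : ℕ, (ofLex (φ (x c))).1 = (toLex (c, 0) : WithRel s ×ₗ ℚ) := fun c =>
    blockSize_injective s (φ.size_fst_apply (x c))
  have hx : x a ≤ x b := (Sigma.Lex.mkZeroEmbedding _).monotone <|
    @Prod.Lex.toLex_mono (WithRel r) ℚ _ _ (a, 0) (b, 0) ⟨hab, le_rfl⟩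
  have hle := Sigma.Lex.fst_le_fst (φ.monotone hx)
  rw [hfst, hfst, Prod.Lex.toLex_le_toLex] at hle
  rcases hle with h | ⟨h, -⟩ <;> exact h.le

end BlockOrder

-- The value at a relation that is not a linear order is irrelevant.
open BlockOrder Classical in
noncomputable def blockModel (r : ℕ → ℕ → Prop) : ℕ → ℕ → Prop :=
  if hr : IsLinearOrder ℕ r then
    haveI : Fact (IsLinearOrder ℕ r) := ⟨hr⟩
    equivNat r ⁻¹'o (· ≤ ·)
  else r

theorem blockModel_eq (r : ℕ → ℕ → Prop) [h : Fact (IsLinearOrder ℕ r)] :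
    blockModel r = BlockOrder.equivNat r ⁻¹'o (· ≤ ·) :=
  dif_pos h.out

section blockModel

variable {r s : ℕ → ℕ → Prop}

theorem blockModel_isLinearOrder (hr : IsLinearOrder ℕ r) : IsLinearOrder ℕ (blockModel r) := by
  have : Fact (IsLinearOrder ℕ r) := ⟨hr⟩
  rw [blockModel_eq]
  exact (RelIso.preimage _ _).toRelEmbedding.isLinearOrder

theorem blockModel_symIndivRel (hr : IsLinearOrder ℕ r) : SymIndivRel (blockModel r) := by
  have : Fact (IsLinearOrder ℕ r) := ⟨hr⟩
  rw [blockModel_eq]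
  exact BlockOrder.symIndivRel.of_relIso (RelIso.preimage _ _)

theorem nonempty_relIso_of_blockModel (hr : IsLinearOrder ℕ r) (hs : IsLinearOrder ℕ s)
    (h : Nonempty (blockModel r ≃r blockModel s)) : Nonempty (r ≃r s) := by
  have : Fact (IsLinearOrder ℕ r) := ⟨hr⟩
  have : Fact (IsLinearOrder ℕ s) := ⟨hs⟩
  rw [blockModel_eq, blockModel_eq] at h
  obtain ⟨j⟩ := h
  let φ : BlockOrder r ≃o BlockOrder s :=
    (RelIso.preimage _ _).symm.trans (j.trans (RelIso.preimage _ _))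
  exact ⟨⟨Equiv.refl ℕ, fun {a b} =>
    ⟨BlockOrder.rel_of_orderIso φ.symm, BlockOrder.rel_of_orderIso φ⟩⟩⟩

end blockModel

theorem exists_injective_map_to_symIndiv_linearOrders :
    ∃ F : (ℕ → ℕ → Prop) → (ℕ → ℕ → Prop),
      (∀ r : ℕ → ℕ → Prop, IsLinearOrder ℕ r → IsLinearOrder ℕ (F r)) ∧
      (∀ r : ℕ → ℕ → Prop, IsLinearOrder ℕ r → SymIndivRel (F r)) ∧
      ∀ r s : ℕ → ℕ → Prop, IsLinearOrder ℕ r → IsLinearOrder ℕ s →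
        Nonempty (F r ≃r F s) → Nonempty (r ≃r s) :=
  ⟨blockModel, fun _ => blockModel_isLinearOrder, fun _ => blockModel_symIndivRel,
    fun _ _ => nonempty_relIso_of_blockModel⟩
end

section
/- Let L be a first-order language and let M and N be L-structures such that there exist a symmetric L-embedding M ↪ N and a symmetric L-embedding N ↪ M. Then M is symmetrically indivisible if and only if N is symmetrically indivisible. -/
open FirstOrder

/-- An `L`-embedding is symmetric if every automorphism of the source pushes forward
along it to an automorphism of the target. -/
def IsSymmetricLEmb {L : Language} {M N : Type*} [L.Structure M] [L.Structure N]
    (e : M ↪[L] N) : Prop :=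
  ∀ g : M ≃[L] M, ∃ g' : N ≃[L] N, ∀ x, g' (e x) = e (g x)

/-- An `L`-structure `M` is symmetrically indivisible if every 2-coloring of `M`
admits a monochromatic symmetric self-embedding. -/
def SymIndiv (L : Language) (M : Type*) [L.Structure M] : Prop :=
  ∀ c : M → Bool, ∃ e : M ↪[L] M, IsSymmetricLEmb e ∧ ∀ x y : M, c (e x) = c (e y)

lemma symIndiv_of_symBiEmb {L : Language} {M N : Type*}
    [L.Structure M] [L.Structure N]
    (f : M ↪[L] N) (hf : IsSymmetricLEmb f)
    (g : N ↪[L] M) (hg : IsSymmetricLEmb g)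
    (hM : SymIndiv L M) : SymIndiv L N := by
  intro c
  obtain ⟨e, he, hmono⟩ := hM (c ∘ f)
  refine ⟨(f.comp e).comp g, ?_, ?_⟩
  · intro h
    obtain ⟨h', hh'⟩ := hg h
    obtain ⟨h'', hh''⟩ := he h'
    obtain ⟨h''', hh'''⟩ := hf h''
    refine ⟨h''', fun x => ?_⟩
    simp only [Language.Embedding.comp_apply, hh''', hh'', hh']
  · intro x y
    exact hmono (g x) (g y)

theorem symIndiv_iff_of_symBiEmbeddable {L : Language} {M N : Type*}
    [L.Structure M] [L.Structure N]
    (h₁ : ∃ e : M ↪[L] N, IsSymmetricLEmb e)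
    (h₂ : ∃ e : N ↪[L] M, IsSymmetricLEmb e) :
    SymIndiv L M ↔ SymIndiv L N := by
  obtain ⟨f, hf⟩ := h₁
  obtain ⟨g, hg⟩ := h₂
  exact ⟨symIndiv_of_symBiEmb f hf g hg, symIndiv_of_symBiEmb g hg f hf⟩
end

section
/- For every countable linear order A there is an order embedding e : A ↪ ℚ that is symmetric, i.e., for every order automorphism g of A there is an order automorphism ĝ of ℚ with ĝ ∘ e = e ∘ g. -/
/-!
Embed `A` into `A ×ₗ ℚ` as `a ↦ (a, 0)`. Every automorphism `g` of `A` extends to the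
automorphism `g × id` of `A ×ₗ ℚ`, and when `A` is countable and nonempty, `A ×ₗ ℚ` is a
countable dense linear order without endpoints, hence isomorphic to `ℚ` by Cantor's theorem.
-/

instance {α : Type*} [Countable α] : Countable (Lex α) := ‹Countable α›

namespace OrderEmbedding

variable {A B C : Type*} [LE A] [LE B] [LE C]

def IsSymmetric (e : A ↪o B) : Prop :=
  ∀ g : A ≃o A, ∃ g' : B ≃o B, ∀ x, g' (e x) = e (g x)

theorem isSymmetric_of_isEmpty [IsEmpty A] (e : A ↪o B) : e.IsSymmetric :=
  fun _ ↦ ⟨OrderIso.refl B, isEmptyElim⟩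

theorem IsSymmetric.trans_orderIso {e : A ↪o B} (he : e.IsSymmetric) (φ : B ≃o C) :
    IsSymmetric (e.trans φ.toOrderEmbedding) := by
  intro g
  obtain ⟨g', hg'⟩ := he g
  exact ⟨(φ.symm.trans g').trans φ, fun x ↦ by simp [hg']⟩

end OrderEmbedding

section LexRat

variable (A : Type*) [LinearOrder A]

def toLexRat : A ↪o A ×ₗ ℚ :=
  OrderEmbedding.ofStrictMono (fun a ↦ toLex (a, 0)) fun _ _ h ↦ Prod.Lex.left _ _ h

theorem isSymmetric_toLexRat : (toLexRat A).IsSymmetric :=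
  fun g ↦ ⟨Prod.Lex.prodLexCongr g (OrderIso.refl ℚ), fun _ ↦ rfl⟩

theorem nonempty_lex_rat_orderIso_rat [Countable A] [Nonempty A] : Nonempty (A ×ₗ ℚ ≃o ℚ) :=
  Order.iso_of_countable_dense _ _

end LexRat

theorem exists_symmetric_orderEmbedding_into_rat
    (A : Type*) [LinearOrder A] [Countable A] :
    ∃ e : A ↪o ℚ, ∀ g : A ≃o A, ∃ g' : ℚ ≃o ℚ, ∀ x, g' (e x) = e (g x) := by
  cases isEmpty_or_nonempty A with
  | inl _ => exact ⟨OrderEmbedding.ofIsEmpty, OrderEmbedding.isSymmetric_of_isEmpty _⟩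
  | inr _ =>
    obtain ⟨φ⟩ := nonempty_lex_rat_orderIso_rat A
    exact ⟨(toLexRat A).trans φ.toOrderEmbedding, (isSymmetric_toLexRat A).trans_orderIso φ⟩
end

section
/- Every countable simple graph G into which the random graph Γ symmetrically embeds is symmetrically indivisible. -/
/-- The extension property characterizing the random graph. -/
def HasExtProp {α : Type*} (G : SimpleGraph α) : Prop :=
  ∀ A B : Finset α, Disjoint A B →
    ∃ v, v ∉ A ∧ v ∉ B ∧ (∀ a ∈ A, G.Adj v a) ∧ ∀ b ∈ B, ¬ G.Adj v b

/-!
Pull a colouring of `G` back to `Γ` along the symmetric embedding `e : Γ ↪ G`. Some colour class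
`S` of `Γ` is generic over a finite set `K`: all its vertices have the same neighbours in `K`, and
it realises every adjacency pattern on every finite set disjoint from `K`, outside any finite set.
It suffices to embed `G` symmetrically into `Γ` with image in `S`, and to compose with `e`.

Such an embedding comes from the free extension of `G` over `K` (towers whose leaves are vertices of
`G` and of `K` and whose other vertices are adjacent exactly to their finitely many children).
Automorphisms of `G` act on towers leafwise, so `G` sits symmetrically in its free extension; and a
back-and-forth argument, sending vertices of `G` into `S` by genericity and the other towers to
witnesses of the extension property, shows that the free extension is isomorphic to `Γ`.
-/

section SymmetricEmbedding

variable {U V W : Type*} {F : SimpleGraph U} {G : SimpleGraph V} {H : SimpleGraph W}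

theorem IsSymmetricGraphEmb.comp {e : G ↪g H} {f : F ↪g G} (he : IsSymmetricGraphEmb e)
    (hf : IsSymmetricGraphEmb f) : IsSymmetricGraphEmb (e.comp f) := by
  intro g
  obtain ⟨g₁, hg₁⟩ := hf g
  obtain ⟨g₂, hg₂⟩ := he g₁
  exact ⟨g₂, fun x => (hg₂ (f x)).trans (congrArg e (hg₁ x))⟩

theorem SimpleGraph.Iso.isSymmetricGraphEmb (Φ : G ≃g H) :
    IsSymmetricGraphEmb Φ.toEmbedding :=
  fun g => ⟨(Φ.symm.trans g).trans Φ, fun x => by simp⟩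

end SymmetricEmbedding

section ExtensionProperty

variable {V : Type*} {Γ : SimpleGraph V}

theorem HasExtProp.exists_adj_iff (hΓ : HasExtProp Γ) (D R : Finset V) (φ : V → Prop) :
    ∃ v ∉ R, ∀ d ∈ D, Γ.Adj v d ↔ φ d := by
  classical
  obtain ⟨v, hvA, hvB, hA, hB⟩ :=
    hΓ (D.filter φ) (D.filter (¬ φ ·) ∪ (R \ D)) (by
      rw [Finset.disjoint_union_right]
      exact ⟨Finset.disjoint_filter_filter_not _ _ _,
        Finset.disjoint_sdiff.mono_left (Finset.filter_subset _ _)⟩)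
  refine ⟨v, fun hvR => ?_, fun d hd => ⟨fun had => ?_, fun hφ => hA d (by simp [hd, hφ])⟩⟩
  · by_cases hvD : v ∈ D
    · by_cases hφ : φ v
      · exact hvA (by simp [hvD, hφ])
      · exact hvB (by simp [hvD, hφ])
    · exact hvB (by simp [hvD, hvR])
  · by_contra hφ
    exact hB d (by simp [hd, hφ]) had

def IsGenericOver (Γ : SimpleGraph V) (K : Finset V) (S : Set V) : Prop :=
  ∀ D R : Finset V, Disjoint D K → ∀ φ : V → Prop, ∃ s ∈ S, s ∉ R ∧ ∀ d ∈ D, Γ.Adj s d ↔ φ d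

/- Either colour `true` is generic over `∅`, or some adjacency pattern `φ₀` on a finite set `D₀`
has no realisation of colour `true` outside a finite set `R₀`; then colour `false` is generic over
`K = D₀ ∪ R₀` within the vertices that realise `φ₀` on `D₀` and avoid `R₀`. -/
theorem HasExtProp.exists_isGenericOver_colorClass (hΓ : HasExtProp Γ) (c : V → Bool) :
    ∃ (b : Bool) (K : Finset V) (σ : V → Prop),
      IsGenericOver Γ K {x | x ∉ K ∧ c x = b ∧ ∀ k ∈ K, Γ.Adj x k ↔ σ k} := by
  classical
  by_cases htrue : IsGenericOver Γ ∅ {x | c x = true}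
  · exact ⟨true, ∅, fun _ => False, by simpa using htrue⟩
  simp only [IsGenericOver, not_forall, not_exists, not_and] at htrue
  obtain ⟨D₀, R₀, -, φ₀, h₀⟩ := htrue
  refine ⟨false, D₀ ∪ R₀, fun v => v ∈ D₀ ∧ φ₀ v, fun D R hD φ => ?_⟩
  obtain ⟨v, hvR, hv⟩ := hΓ.exists_adj_iff (D ∪ (D₀ ∪ R₀)) (R ∪ (D₀ ∪ R₀))
    fun d => if d ∈ D₀ ∪ R₀ then d ∈ D₀ ∧ φ₀ d else φ d
  simp only [Finset.mem_union, not_or] at hvR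
  have hvK : ∀ k ∈ D₀ ∪ R₀, Γ.Adj v k ↔ k ∈ D₀ ∧ φ₀ k := fun k hk => by
    simpa [hk] using hv k (Finset.mem_union_right _ hk)
  refine ⟨v, ⟨by simp [hvR.2.1, hvR.2.2], ?_, hvK⟩, by simp [hvR.1], fun d hd => ?_⟩
  · by_contra hc
    obtain ⟨d, hd, hne⟩ := h₀ v (by simpa using hc) hvR.2.2
    exact hne ((hvK d (Finset.mem_union_left _ hd)).trans (and_iff_right hd))
  · have hdK : d ∉ D₀ ∪ R₀ := Finset.disjoint_left.mp hD hd
    simpa [hdK] using hv d (Finset.mem_union_left _ hd)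

end ExtensionProperty

section BackAndForth

variable {X Y : Type*} {Δ : SimpleGraph X} {Γ : SimpleGraph Y} {P : X → Y → Prop}

variable (Δ Γ P) in
def IsPartialIso (p : Finset (X × Y)) : Prop :=
  ∀ q ∈ p, P q.1 q.2 ∧ ∀ q' ∈ p, (q.1 = q'.1 ↔ q.2 = q'.2) ∧ (Δ.Adj q.1 q'.1 ↔ Γ.Adj q.2 q'.2)

namespace IsPartialIso

variable {p : Finset (X × Y)}

theorem exists_snd_eq_iff (hp : IsPartialIso Δ Γ P p) {q : X × Y} (hq : q ∈ p) (Q : X → Prop) :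
    (∃ q' ∈ p, q'.2 = q.2 ∧ Q q'.1) ↔ Q q.1 := by
  refine ⟨fun ⟨q', hq', heq, hQ⟩ => ?_, fun hQ => ⟨q, hq, rfl, hQ⟩⟩
  rwa [← ((hp q' hq').2 q hq).1.mpr heq]

theorem exists_fst_eq_iff (hp : IsPartialIso Δ Γ P p) {q : X × Y} (hq : q ∈ p) (Q : Y → Prop) :
    (∃ q' ∈ p, q'.1 = q.1 ∧ Q q'.2) ↔ Q q.2 := by
  refine ⟨fun ⟨q', hq', heq, hQ⟩ => ?_, fun hQ => ⟨q, hq, rfl, hQ⟩⟩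
  rwa [← ((hp q' hq').2 q hq).1.mp heq]

variable [DecidableEq X] [DecidableEq Y] in
protected theorem insert (hp : IsPartialIso Δ Γ P p) {x : X} {y : Y} (hP : P x y)
    (hx : ∀ q ∈ p, q.1 ≠ x) (hy : ∀ q ∈ p, q.2 ≠ y)
    (hadj : ∀ q ∈ p, Δ.Adj x q.1 ↔ Γ.Adj y q.2) : IsPartialIso Δ Γ P (insert (x, y) p) := by
  have hxy : ∀ q ∈ p, (x = q.1 ↔ y = q.2) ∧ (Δ.Adj x q.1 ↔ Γ.Adj y q.2) := fun q hq =>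
    ⟨iff_of_false (hx q hq).symm (hy q hq).symm, hadj q hq⟩
  simp only [IsPartialIso, Finset.forall_mem_insert]
  refine ⟨⟨hP, by simp, hxy⟩, fun q hq => ⟨(hp q hq).1, ?_, (hp q hq).2⟩⟩
  rw [eq_comm, @eq_comm _ q.2, Δ.adj_comm, Γ.adj_comm]
  exact hxy q hq

end IsPartialIso

variable [DecidableEq X] [DecidableEq Y] (p₀ : Finset (X × Y))
  (forth : ∀ p, p₀ ⊆ p → IsPartialIso Δ Γ P p →
    ∀ x, (∀ q ∈ p, q.1 ≠ x) → ∃ y, IsPartialIso Δ Γ P (insert (x, y) p))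
  (back : ∀ p, p₀ ⊆ p → IsPartialIso Δ Γ P p →
    ∀ y, (∀ q ∈ p, q.2 ≠ y) → ∃ x, IsPartialIso Δ Γ P (insert (x, y) p))

include forth in
theorem IsPartialIso.exists_forth {p : Finset (X × Y)} (hp₀ : p₀ ⊆ p)
    (hp : IsPartialIso Δ Γ P p) (ox : Option X) :
    ∃ p', p ⊆ p' ∧ IsPartialIso Δ Γ P p' ∧ ∀ x ∈ ox, ∃ y, (x, y) ∈ p' := by
  rcases ox with _ | x
  · exact ⟨p, subset_rfl, hp, by simp⟩
  simp only [Option.mem_def, Option.some.injEq, forall_eq']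
  by_cases hx : ∃ q ∈ p, q.1 = x
  · obtain ⟨q, hq, rfl⟩ := hx
    exact ⟨p, subset_rfl, hp, q.2, hq⟩
  obtain ⟨y, hy⟩ := forth p hp₀ hp x fun q hq h => hx ⟨q, hq, h⟩
  exact ⟨_, Finset.subset_insert _ _, hy, y, Finset.mem_insert_self _ _⟩

include back in
theorem IsPartialIso.exists_back {p : Finset (X × Y)} (hp₀ : p₀ ⊆ p)
    (hp : IsPartialIso Δ Γ P p) (oy : Option Y) :
    ∃ p', p ⊆ p' ∧ IsPartialIso Δ Γ P p' ∧ ∀ y ∈ oy, ∃ x, (x, y) ∈ p' := by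
  rcases oy with _ | y
  · exact ⟨p, subset_rfl, hp, by simp⟩
  simp only [Option.mem_def, Option.some.injEq, forall_eq']
  by_cases hy : ∃ q ∈ p, q.2 = y
  · obtain ⟨q, hq, rfl⟩ := hy
    exact ⟨p, subset_rfl, hp, q.1, hq⟩
  obtain ⟨x, hx⟩ := back p hp₀ hp y fun q hq h => hy ⟨q, hq, h⟩
  exact ⟨_, Finset.subset_insert _ _, hx, x, Finset.mem_insert_self _ _⟩

include forth back in
theorem exists_partialIso_chain [Countable X] [Countable Y] (h₀ : IsPartialIso Δ Γ P p₀) :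
    ∃ c : ℕ → Finset (X × Y), Monotone c ∧ (∀ n, IsPartialIso Δ Γ P (c n)) ∧
      (∀ x, ∃ n y, (x, y) ∈ c n) ∧ ∀ y, ∃ n x, (x, y) ∈ c n := by
  have := Encodable.ofCountable X
  have := Encodable.ofCountable Y
  have step : ∀ p n, ∃ p', p₀ ⊆ p → IsPartialIso Δ Γ P p → p ⊆ p' ∧ IsPartialIso Δ Γ P p' ∧
      (∀ x ∈ Encodable.decode (α := X) n, ∃ y, (x, y) ∈ p') ∧
      ∀ y ∈ Encodable.decode (α := Y) n, ∃ x, (x, y) ∈ p' := by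
    intro p n
    by_cases hp : p₀ ⊆ p ∧ IsPartialIso Δ Γ P p
    · obtain ⟨p₁, h₁, hp₁, hx⟩ := IsPartialIso.exists_forth p₀ forth hp.1 hp.2 (Encodable.decode n)
      obtain ⟨p₂, h₂, hp₂, hy⟩ :=
        IsPartialIso.exists_back p₀ back (hp.1.trans h₁) hp₁ (Encodable.decode n)
      exact ⟨p₂, fun _ _ => ⟨h₁.trans h₂, hp₂, fun x hx' => (hx x hx').imp fun _ h => h₂ h, hy⟩⟩
    · exact ⟨p, fun h₀ hp' => (hp ⟨h₀, hp'⟩).elim⟩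
  choose next hnext using step
  set c : ℕ → Finset (X × Y) := fun n => Nat.rec p₀ (fun n p => next p n) n
  have hc : ∀ n, p₀ ⊆ c n ∧ IsPartialIso Δ Γ P (c n) := by
    intro n
    induction n with
    | zero => exact ⟨subset_rfl, h₀⟩
    | succ n ih =>
      obtain ⟨hsub, hiso, -⟩ := hnext (c n) n ih.1 ih.2
      exact ⟨ih.1.trans hsub, hiso⟩
  refine ⟨c, monotone_nat_of_le_succ fun n => (hnext (c n) n (hc n).1 (hc n).2).1,
    fun n => (hc n).2, fun x => ?_, fun y => ?_⟩
  · obtain ⟨y, hy⟩ := (hnext (c _) _ (hc _).1 (hc _).2).2.2.1 x (Encodable.encodek x)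
    exact ⟨Encodable.encode x + 1, y, hy⟩
  · obtain ⟨x, hx⟩ := (hnext (c _) _ (hc _).1 (hc _).2).2.2.2 y (Encodable.encodek y)
    exact ⟨Encodable.encode y + 1, x, hx⟩

include forth back in
theorem exists_iso_of_backAndForth [Countable X] [Countable Y] (h₀ : IsPartialIso Δ Γ P p₀) :
    ∃ Φ : Δ ≃g Γ, ∀ x, P x (Φ x) := by
  obtain ⟨c, hmono, hc, hX, hY⟩ := exists_partialIso_chain p₀ forth back h₀
  have key : ∀ ⦃x y x' y'⦄ ⦃m n : ℕ⦄, (x, y) ∈ c m → (x', y') ∈ c n →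
      P x y ∧ (x = x' ↔ y = y') ∧ (Δ.Adj x x' ↔ Γ.Adj y y') := fun x y x' y' m n hm hn =>
    let h := hc (max m n) _ (hmono (le_max_left m n) hm)
    ⟨h.1, h.2 _ (hmono (le_max_right m n) hn)⟩
  choose nX F hF using hX
  have hbij : Function.Bijective F := by
    refine ⟨fun x x' h => (key (hF x) (hF x')).2.1.mpr h, fun y => ?_⟩
    obtain ⟨n, x, hx⟩ := hY y
    exact ⟨x, (key (hF x) hx).2.1.mp rfl⟩
  exact ⟨⟨Equiv.ofBijective F hbij, fun {x x'} => (key (hF x) (hF x')).2.2.symm⟩,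
    fun x => (key (hF x) (hF x)).1⟩

end BackAndForth

/- The free extension of a graph on `α` over a set `κ` of parameters: besides the leaves `base a`
and `const k`, a vertex `node n j f` is adjacent to its children `f i` (and to the nodes having it
as a child); the tag `n` provides infinitely many vertices with the same children. -/
inductive Tower (α κ : Type*)
  | base : α → Tower α κ
  | const : κ → Tower α κ
  | node : ℕ → (j : ℕ) → (Fin j → Tower α κ) → Tower α κ

namespace Tower

variable {α κ : Type*}

def children : Tower α κ → Set (Tower α κ)
  | node _ _ f => Set.range f
  | _ => ∅

theorem finite_children (t : Tower α κ) : t.children.Finite := by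
  cases t <;> simp [children, Set.finite_range]

noncomputable def ofFinset (n : ℕ) (C : Finset (Tower α κ)) : Tower α κ :=
  node n C.card fun i => C.equivFin.symm i

theorem exists_fresh_ofFinset (F C : Finset (Tower α κ)) :
    ∃ n, ofFinset n C ∉ F ∧ ∀ t ∈ F, ofFinset n C ∉ t.children := by
  have hfin : (↑F ∪ ⋃ t ∈ F, t.children : Set (Tower α κ)).Finite :=
    F.finite_toSet.union (F.finite_toSet.biUnion fun t _ => t.finite_children)
  obtain ⟨n, hn⟩ := (hfin.preimage (f := fun n => ofFinset n C)
    (fun _ _ _ _ h => by simpa [ofFinset] using h)).exists_notMem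
  simp only [Set.mem_preimage, Set.mem_union, Finset.mem_coe, Set.mem_iUnion, not_or,
    not_exists] at hn
  exact ⟨n, hn.1, hn.2⟩

theorem children_ofFinset (n : ℕ) (C : Finset (Tower α κ)) :
    (ofFinset n C).children = C := by
  ext t
  simp only [ofFinset, children, Set.mem_range, Finset.mem_coe]
  exact ⟨by rintro ⟨i, rfl⟩; exact (C.equivFin.symm i).2, fun h => ⟨C.equivFin ⟨t, h⟩, by simp⟩⟩

def depth : Tower α κ → ℕ
  | node _ _ f => (Finset.univ.sup fun i => (f i).depth) + 1
  | _ => 0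

theorem countable_setOf_depth_le [Countable α] [Countable κ] (m : ℕ) :
    {t : Tower α κ | t.depth ≤ m}.Countable := by
  induction m with
  | zero =>
    refine ((Set.countable_range base).union (Set.countable_range const)).mono ?_
    rintro (a | k | ⟨n, j, f⟩) h <;> simp_all [depth]
  | succ m ih =>
    have : Countable {t : Tower α κ | t.depth ≤ m} := ih.to_subtype
    refine ((Set.countable_range base).union ((Set.countable_range const).union
      (Set.countable_range fun x : ℕ × Σ j, Fin j → {t : Tower α κ | t.depth ≤ m} =>
        node x.1 x.2.1 fun i => x.2.2 i))).mono ?_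
    rintro (a | k | ⟨n, j, f⟩) h
    · simp
    · simp
    · refine Or.inr (Or.inr ⟨(n, ⟨j, fun i => ⟨f i, ?_⟩⟩), rfl⟩)
      have : (Finset.univ.sup fun i => (f i).depth) ≤ m := by simpa [depth] using h
      exact (Finset.le_sup (f := fun i => (f i).depth) (Finset.mem_univ i)).trans this

instance [Countable α] [Countable κ] : Countable (Tower α κ) := by
  have : (⋃ m, {t : Tower α κ | t.depth ≤ m}).Countable :=
    Set.countable_iUnion countable_setOf_depth_le
  rw [Set.iUnion_eq_univ_iff.mpr fun t => ⟨t.depth, le_refl t.depth⟩] at this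
  exact Set.countable_univ_iff.mp this

def map (g : α → α) : Tower α κ → Tower α κ
  | base a => base (g a)
  | const k => const k
  | node n j f => node n j fun i => (f i).map g

theorem map_map (g g' : α → α) (t : Tower α κ) : (t.map g').map g = t.map (g ∘ g') := by
  induction t with
  | base a => rfl
  | const k => rfl
  | node n j f ih => simp [map, ih]

theorem map_id (t : Tower α κ) : t.map id = t := by
  induction t with
  | base a => rfl
  | const k => rfl
  | node n j f ih => simp [map, ih]

def mapEquiv (g : α ≃ α) : Tower α κ ≃ Tower α κ where
  toFun := map g
  invFun := map g.symm
  left_inv t := by simp [map_map, map_id]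
  right_inv t := by simp [map_map, map_id]

theorem children_map (g : α → α) (t : Tower α κ) : (t.map g).children = map g '' t.children := by
  cases t
  all_goals simp only [map, children, Set.image_empty]
  exact Set.range_comp _ _

def leafRel (G : SimpleGraph α) (H : SimpleGraph κ) (σ : κ → Prop) :
    Tower α κ → Tower α κ → Prop
  | base a, base b => G.Adj a b
  | const k, const l => H.Adj k l
  | base _, const k => σ k
  | _, _ => False

def graph (G : SimpleGraph α) (H : SimpleGraph κ) (σ : κ → Prop) : SimpleGraph (Tower α κ) :=
  SimpleGraph.fromRel fun s t => s ∈ t.children ∨ leafRel G H σ s t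

variable {G : SimpleGraph α} {H : SimpleGraph κ} {σ : κ → Prop}

theorem graph_adj_base_base (a b : α) : (graph G H σ).Adj (base a) (base b) ↔ G.Adj a b := by
  simp [graph, leafRel, children, G.adj_comm b a]
  exact G.ne_of_adj

theorem graph_adj_base_const (a : α) (k : κ) : (graph G H σ).Adj (base a) (const k) ↔ σ k := by
  simp [graph, leafRel, children]

theorem graph_adj_const_const (k l : κ) : (graph G H σ).Adj (const k) (const l) ↔ H.Adj k l := by
  simp [graph, leafRel, children, H.adj_comm l k]
  exact H.ne_of_adj

theorem graph_adj_ofFinset {n : ℕ} {C : Finset (Tower α κ)} {t : Tower α κ}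
    (hne : ofFinset n C ≠ t) (hnc : ofFinset n C ∉ t.children) :
    (graph G H σ).Adj (ofFinset n C) t ↔ t ∈ C := by
  rw [← Finset.mem_coe, ← children_ofFinset n C]
  cases t <;> simp_all [graph, leafRel, children, ofFinset]

theorem leafRel_map (g : G ≃g G) (s t : Tower α κ) :
    leafRel G H σ (s.map g) (t.map g) ↔ leafRel G H σ s t := by
  cases s <;> cases t <;> simp [leafRel, map, g.map_adj_iff]

def liftIso (g : G ≃g G) : graph G H σ ≃g graph G H σ where
  toEquiv := mapEquiv g.toEquiv
  map_rel_iff' {s t} := by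
    have hinj : Function.Injective (map (κ := κ) g) := (mapEquiv (κ := κ) g.toEquiv).injective
    simp only [graph, SimpleGraph.fromRel_adj, mapEquiv, Equiv.coe_fn_mk, RelIso.coe_fn_toEquiv,
      hinj.ne_iff, children_map, hinj.mem_set_image, leafRel_map]

def baseEmbedding : G ↪g graph G H σ where
  toFun := base
  inj' _ _ h := by injection h
  map_rel_iff' := graph_adj_base_base _ _

theorem isSymmetricGraphEmb_baseEmbedding :
    IsSymmetricGraphEmb (baseEmbedding (G := G) (H := H) (σ := σ)) :=
  fun g => ⟨liftIso g, fun _ => rfl⟩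

end Tower

section TowerModel

open Tower

variable {V W : Type*} {Γ : SimpleGraph V} {K : Finset V} {S : Set V} {σ : V → Prop}
  {G : SimpleGraph W}

variable (Γ K σ G) in
abbrev towerGraph : SimpleGraph (Tower W K) :=
  graph G (Γ.comap ((↑) : K → V)) fun k => σ k

def Tower.Admissible (K : Finset V) (S : Set V) : Tower W K → V → Prop
  | base _, y => y ∈ S
  | const k, y => y = k
  | node _ _ _, y => y ∉ K

theorem Tower.eq_const_of_admissible (hSK : ∀ s ∈ S, s ∉ K) {t : Tower W K} {y : V}
    (ht : t.Admissible K S y) (hy : y ∈ K) : t = const ⟨y, hy⟩ := by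
  cases t with
  | base _ => exact absurd hy (hSK y ht)
  | const k => cases ht; rfl
  | node _ _ _ => exact absurd hy ht

variable (W K) in
def constPairs : Finset (Tower W K × V) :=
  K.attach.map ⟨fun k => (const k, k.1), fun _ _ h => Subtype.ext (congrArg Prod.snd h)⟩

theorem mem_constPairs (k : K) : (const k, k.1) ∈ constPairs W K :=
  Finset.mem_map_of_mem _ (K.mem_attach k)

theorem isPartialIso_constPairs :
    IsPartialIso (towerGraph Γ K σ G) Γ (Admissible K S) (constPairs W K) := by
  simp only [IsPartialIso, constPairs, Finset.forall_mem_map, Finset.mem_attach, forall_const]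
  refine fun k => ⟨rfl, fun l => ⟨?_, graph_adj_const_const k l⟩⟩
  exact ⟨fun h => by cases h; rfl, fun h => congrArg const (Subtype.ext h)⟩

variable [DecidableEq (Tower W K)] [DecidableEq V] in
theorem HasExtProp.towerGraph_forth (hΓ : HasExtProp Γ) (hS : IsGenericOver Γ K S)
    (hSK : ∀ s ∈ S, s ∉ K ∧ ∀ k ∈ K, Γ.Adj s k ↔ σ k) (p : Finset (Tower W K × V))
    (hp₀ : constPairs W K ⊆ p) (hp : IsPartialIso (towerGraph Γ K σ G) Γ (Admissible K S) p)
    (x : Tower W K) (hx : ∀ q ∈ p, q.1 ≠ x) :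
    ∃ y, IsPartialIso (towerGraph Γ K σ G) Γ (Admissible K S) (insert (x, y) p) := by
  have hsnd : ∀ q ∈ p, q.2 ∈ p.image Prod.snd := fun q hq => Finset.mem_image_of_mem _ hq
  set φ : V → Prop := fun y' => ∃ q ∈ p, q.2 = y' ∧ (towerGraph Γ K σ G).Adj x q.1
  cases x with
  | base w =>
    obtain ⟨s, hsS, hsR, hs⟩ := hS (p.image Prod.snd \ K) (p.image Prod.snd)
      Finset.sdiff_disjoint φ
    refine ⟨s, hp.insert hsS hx (fun q hq h => hsR (h ▸ hsnd q hq)) fun q hq => ?_⟩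
    -- on `K`, where `p` holds the constants, the adjacency of `s` is forced to be `σ`
    by_cases hqK : q.2 ∈ K
    · rw [eq_const_of_admissible (fun s hs => (hSK s hs).1) (hp q hq).1 hqK,
        graph_adj_base_const]
      exact ((hSK s hsS).2 _ hqK).symm
    · exact ((hs q.2 (Finset.mem_sdiff.mpr ⟨hsnd q hq, hqK⟩)).trans
        (hp.exists_snd_eq_iff hq _)).symm
  | const k => exact absurd rfl (hx _ (hp₀ (mem_constPairs k)))
  | node n j f =>
    obtain ⟨y, hyR, hy⟩ := hΓ.exists_adj_iff (p.image Prod.snd) (p.image Prod.snd ∪ K) φ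
    rw [Finset.mem_union, not_or] at hyR
    exact ⟨y, hp.insert hyR.2 hx (fun q hq h => hyR.1 (h ▸ hsnd q hq))
      fun q hq => ((hy q.2 (hsnd q hq)).trans (hp.exists_snd_eq_iff hq _)).symm⟩

variable [DecidableEq (Tower W K)] [DecidableEq V] in
theorem towerGraph_back (p : Finset (Tower W K × V)) (hp₀ : constPairs W K ⊆ p)
    (hp : IsPartialIso (towerGraph Γ K σ G) Γ (Admissible K S) p) (y : V)
    (hy : ∀ q ∈ p, q.2 ≠ y) :
    ∃ x, IsPartialIso (towerGraph Γ K σ G) Γ (Admissible K S) (insert (x, y) p) := by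
  classical
  by_cases hyK : y ∈ K
  · exact absurd rfl (hy _ (hp₀ (mem_constPairs ⟨y, hyK⟩)))
  set C := (p.filter fun q : Tower W K × V => Γ.Adj y q.2).image Prod.fst
  have hfst : ∀ q ∈ p, q.1 ∈ p.image Prod.fst := fun q hq => Finset.mem_image_of_mem _ hq
  obtain ⟨n, hn, hnc⟩ := exists_fresh_ofFinset (p.image Prod.fst) C
  refine ⟨ofFinset n C, hp.insert hyK (fun q hq h => hn (h ▸ hfst q hq)) hy fun q hq => ?_⟩
  rw [graph_adj_ofFinset (fun h => hn (h ▸ hfst q hq)) (hnc _ (hfst q hq))]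
  simpa [C, and_comm, and_assoc] using hp.exists_fst_eq_iff hq (Γ.Adj y)

theorem HasExtProp.exists_iso_towerGraph [Countable V] [Countable W] (hΓ : HasExtProp Γ)
    (hS : IsGenericOver Γ K S) (hSK : ∀ s ∈ S, s ∉ K ∧ ∀ k ∈ K, Γ.Adj s k ↔ σ k) :
    ∃ Φ : towerGraph Γ K σ G ≃g Γ, ∀ w, Φ (base w) ∈ S := by
  classical
  exact (exists_iso_of_backAndForth _ (hΓ.towerGraph_forth hS hSK) towerGraph_back
    isPartialIso_constPairs).imp fun _ hΦ w => hΦ (base w)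

end TowerModel

theorem HasExtProp.exists_isSymmetricGraphEmb_into {V W : Type*} [Countable V] [Countable W]
    {Γ : SimpleGraph V} {K : Finset V} {S : Set V} {σ : V → Prop} (hΓ : HasExtProp Γ)
    (hS : IsGenericOver Γ K S) (hSK : ∀ s ∈ S, s ∉ K ∧ ∀ k ∈ K, Γ.Adj s k ↔ σ k)
    (G : SimpleGraph W) : ∃ f : G ↪g Γ, IsSymmetricGraphEmb f ∧ ∀ w, f w ∈ S := by
  obtain ⟨Φ, hΦ⟩ := hΓ.exists_iso_towerGraph (G := G) hS hSK
  exact ⟨Φ.toEmbedding.comp Tower.baseEmbedding,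
    Φ.isSymmetricGraphEmb.comp Tower.isSymmetricGraphEmb_baseEmbedding, hΦ⟩

theorem symIndivGraph_of_symEmb_randomGraph {V W : Type*} [Countable V] [Countable W]
    (Γ : SimpleGraph V) (hΓ : HasExtProp Γ) (G : SimpleGraph W)
    (h : ∃ e : Γ ↪g G, IsSymmetricGraphEmb e) :
    SymIndivGraph G := by
  obtain ⟨e, he⟩ := h
  intro c
  obtain ⟨b, K, σ, hS⟩ := hΓ.exists_isGenericOver_colorClass (c ∘ e)
  obtain ⟨f, hf, hfS⟩ := hΓ.exists_isSymmetricGraphEmb_into hS (fun _ hs => ⟨hs.1, hs.2.2⟩) G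
  exact ⟨e.comp f, he.comp hf, fun x y => (hfS x).2.1.trans (hfS y).2.1.symm⟩
end

section
/- Every countable linear order A into which (ℚ, <) symmetrically embeds is symmetrically indivisible. -/
/-!
Since `ℚ ×ₗ ℚ ≃o ℚ`, a 2-coloring of `ℚ` is a coloring of the lexicographic plane. Either every
fiber `{a} ×ₗ ℚ` contains a `true` point, and the graph of a choice of such points is a
monochromatic copy of `ℚ`, or some fiber is entirely `false`. Both copies are symmetric, since an
automorphism of the copy extends fiberwise to the plane (by translating each fiber in the first
case). A nonempty countable `A` embeds symmetrically into `ℚ ≃o A ×ₗ ℚ` as `A × {0}`, so the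
composite `A ↪ ℚ ↪ ℚ ↪ A` of symmetric embeddings, with the middle one monochromatic for the
coloring pulled back to `ℚ`, is monochromatic and symmetric.
-/

/-- An order embedding is symmetric if every order automorphism of the source pushes
forward along it to an order automorphism of the target. -/
def IsSymmetricOrderEmb {α β : Type*} [LinearOrder α] [LinearOrder β]
    (e : α ↪o β) : Prop :=
  ∀ g : α ≃o α, ∃ g' : β ≃o β, ∀ x, g' (e x) = e (g x)

/-- A linear order is symmetrically indivisible if every 2-coloring admits a
monochromatic symmetric self-embedding. -/
def SymIndivOrder (α : Type*) [LinearOrder α] : Prop :=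
  ∀ c : α → Bool, ∃ e : α ↪o α, IsSymmetricOrderEmb e ∧ ∀ x y, c (e x) = c (e y)

namespace Prod.Lex

variable {α α' β β' : Type*}

instance [Countable α] [Countable β] : Countable (α ×ₗ β) :=
  inferInstanceAs (Countable (α × β))

def fiberwiseCongr [Preorder α] [Preorder α'] [Preorder β] [Preorder β']
    (g : α ≃o α') (h : α → β ≃o β') : α ×ₗ β ≃o α' ×ₗ β' where
  toFun p := toLex (g (ofLex p).1, h (ofLex p).1 (ofLex p).2)
  invFun p := toLex (g.symm (ofLex p).1, (h (g.symm (ofLex p).1)).symm (ofLex p).2)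
  left_inv p := by simp
  right_inv p := by simp
  map_rel_iff' {p q} := by
    simp only [Equiv.coe_fn_mk, le_iff, ofLex_toLex, g.lt_iff_lt, g.apply_eq_iff_eq]
    constructor <;> rintro (hlt | ⟨heq, hle⟩)
    · exact Or.inl hlt
    · exact Or.inr ⟨heq, (h _).le_iff_le.mp (by rwa [heq] at hle)⟩
    · exact Or.inl hlt
    · exact Or.inr ⟨heq, by rw [heq]; exact (h _).le_iff_le.mpr hle⟩

@[simp]
theorem fiberwiseCongr_toLex [Preorder α] [Preorder α'] [Preorder β] [Preorder β']
    (g : α ≃o α') (h : α → β ≃o β') (a : α) (b : β) :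
    fiberwiseCongr g h (toLex (a, b)) = toLex (g a, h a b) :=
  rfl

variable [LinearOrder α] [LinearOrder β]

def graphEmbedding (s : α → β) : α ↪o α ×ₗ β :=
  OrderEmbedding.ofStrictMono (fun a => toLex (a, s a)) fun _ _ h =>
    toLex_lt_toLex.mpr (Or.inl h)

@[simp]
theorem graphEmbedding_apply (s : α → β) (a : α) : graphEmbedding s a = toLex (a, s a) :=
  rfl

def fiberEmbedding (a : α) : β ↪o α ×ₗ β :=
  OrderEmbedding.ofStrictMono (fun b => toLex (a, b)) fun _ _ h =>
    toLex_lt_toLex.mpr (Or.inr ⟨rfl, h⟩)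

@[simp]
theorem fiberEmbedding_apply (a : α) (b : β) : fiberEmbedding a b = toLex (a, b) :=
  rfl

end Prod.Lex

namespace IsSymmetricOrderEmb

variable {α β γ : Type*} [LinearOrder α] [LinearOrder β] [LinearOrder γ]

theorem trans {e₁ : α ↪o β} {e₂ : β ↪o γ} (h₁ : IsSymmetricOrderEmb e₁)
    (h₂ : IsSymmetricOrderEmb e₂) : IsSymmetricOrderEmb (e₁.trans e₂) := by
  intro g
  obtain ⟨g₁, hg₁⟩ := h₁ g
  obtain ⟨g₂, hg₂⟩ := h₂ g₁
  exact ⟨g₂, fun x => by simp [hg₂, hg₁]⟩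

theorem orderIso (φ : α ≃o β) : IsSymmetricOrderEmb φ.toOrderEmbedding :=
  fun g => ⟨(φ.symm.trans g).trans φ, fun x => by simp⟩

theorem graphEmbedding [AddGroup β] [AddLeftMono β] (s : α → β) :
    IsSymmetricOrderEmb (Prod.Lex.graphEmbedding s) :=
  fun g => ⟨Prod.Lex.fiberwiseCongr g fun a => OrderIso.addLeft (s (g a) - s a),
    fun a => by simp⟩

theorem fiberEmbedding (a : α) : IsSymmetricOrderEmb (Prod.Lex.fiberEmbedding (β := β) a) :=
  fun g => ⟨Prod.Lex.fiberwiseCongr (.refl α) (Function.update (fun _ => .refl β) a g),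
    fun b => by simp⟩

end IsSymmetricOrderEmb

namespace SymIndivOrder

open Prod.Lex

variable {α β : Type*} [LinearOrder α] [LinearOrder β]

theorem of_isSymmetricOrderEmb (hβ : SymIndivOrder β) {i : α ↪o β} (hi : IsSymmetricOrderEmb i)
    {e : β ↪o α} (he : IsSymmetricOrderEmb e) : SymIndivOrder α := by
  intro c
  obtain ⟨j, hj, hjc⟩ := hβ (c ∘ e)
  exact ⟨(i.trans j).trans e, (hi.trans hj).trans he, fun x y => hjc (i x) (i y)⟩

theorem of_orderIso_lex [AddGroup α] [AddLeftMono α] (φ : α ×ₗ α ≃o α) : SymIndivOrder α := by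
  intro c
  by_cases H : ∀ a, ∃ b, c (φ (toLex (a, b))) = true
  · choose s hs using H
    exact ⟨(graphEmbedding s).trans φ.toOrderEmbedding,
      (IsSymmetricOrderEmb.graphEmbedding s).trans (.orderIso φ),
      fun x y => by simp [hs]⟩
  · push Not at H
    obtain ⟨a, ha⟩ := H
    exact ⟨(fiberEmbedding a).trans φ.toOrderEmbedding,
      (IsSymmetricOrderEmb.fiberEmbedding a).trans (.orderIso φ),
      fun x y => by simp [ha]⟩

end SymIndivOrder

theorem symIndivOrder_rat : SymIndivOrder ℚ :=
  .of_orderIso_lex (Order.iso_of_countable_dense (ℚ ×ₗ ℚ) ℚ).some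

theorem exists_isSymmetricOrderEmb_rat (α : Type*) [LinearOrder α] [Countable α] [Nonempty α] :
    ∃ i : α ↪o ℚ, IsSymmetricOrderEmb i := by
  obtain ⟨φ⟩ := Order.iso_of_countable_dense (α ×ₗ ℚ) ℚ
  exact ⟨(Prod.Lex.graphEmbedding 0).trans φ.toOrderEmbedding,
    (IsSymmetricOrderEmb.graphEmbedding 0).trans (.orderIso φ)⟩

theorem symIndivOrder_of_symEmb_rat (A : Type*) [LinearOrder A] [Countable A]
    (h : ∃ e : ℚ ↪o A, IsSymmetricOrderEmb e) :
    SymIndivOrder A := by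
  obtain ⟨e, he⟩ := h
  have : Nonempty A := ⟨e 0⟩
  obtain ⟨i, hi⟩ := exists_isSymmetricOrderEmb_rat A
  exact symIndivOrder_rat.of_isSymmetricOrderEmb hi he
end

section
/- Let Γ be a countable graph with the extension property, and let G and H be simple graphs. If the disjoint union Γ ⊔ G is isomorphic to the disjoint union Γ ⊔ H, then G is isomorphic to H. -/
open Sum SimpleGraph

private lemma sum_reach_isLeft {α β : Type*} {G : SimpleGraph α} {H : SimpleGraph β}
    {x y : α ⊕ β} (h : (G ⊕g H).Reachable x y) : x.isLeft = y.isLeft := by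
  obtain ⟨w⟩ := h
  induction w with
  | nil => rfl
  | @cons u v _ hadj p ih =>
    cases u <;> cases v <;> simp_all [SimpleGraph.sum_adj]

private lemma ext_reach {V γ : Type*} [DecidableEq V] {Γ : SimpleGraph V} (hΓ : HasExtProp Γ)
    {K : SimpleGraph γ} (u v : V) : (Γ ⊕g K).Reachable (inl u) (inl v) := by
  obtain ⟨w, -, -, hw, -⟩ := hΓ {u, v} ∅ (Finset.disjoint_empty_right _)
  have h1 : (Γ ⊕g K).Adj (inl u) (inl w) := by
    simp only [SimpleGraph.sum_adj]; exact (hw u (by simp)).symm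
  have h2 : (Γ ⊕g K).Adj (inl w) (inl v) := by
    simp only [SimpleGraph.sum_adj]; exact hw v (by simp)
  exact h1.reachable.trans h2.reachable

theorem iso_of_sum_randomGraph_iso {V α β : Type*} [Countable V]
    (Γ : SimpleGraph V) (hΓ : HasExtProp Γ)
    (G : SimpleGraph α) (H : SimpleGraph β)
    (h : Nonempty ((Γ ⊕g G) ≃g (Γ ⊕g H))) :
    Nonempty (G ≃g H) := by
  classical
  obtain ⟨f⟩ := h
  obtain ⟨v₀, -, -, -, -⟩ := hΓ ∅ ∅ (Finset.disjoint_empty_right _)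
  by_cases hc : ∀ v : V, ∃ w, f (inl v) = inl w
  · -- Case A: f maps the Γ part onto the Γ part
    have hR : ∀ a : α, ∃ b, f (inr a) = inr b := by
      intro a
      rcases hx : f (inr a) with w | b
      · exfalso
        obtain ⟨w₀, hw₀⟩ := hc v₀
        have e1 : f.symm (inl w₀) = inl v₀ := by
          rw [← hw₀]; exact f.symm_apply_apply _
        have e2 : f.symm (inl w) = inr a := by
          rw [← hx]; exact f.symm_apply_apply _
        have hr'' : (Γ ⊕g G).Reachable (inl v₀) (inr a) := by
          rw [← e1, ← e2]
          exact (ext_reach hΓ w₀ w).map f.symm.toHom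
        exact absurd (sum_reach_isLeft hr'') (by simp)
      · exact ⟨b, rfl⟩
    have hR' : ∀ b : β, ∃ a, f.symm (inr b) = inr a := by
      intro b
      rcases hx : f.symm (inr b) with v | a
      · exfalso
        obtain ⟨w, hw⟩ := hc v
        have : f (f.symm (inr b)) = inr b := f.apply_symm_apply _
        rw [hx, hw] at this
        simp at this
      · exact ⟨a, rfl⟩
    refine ⟨⟨Equiv.mk (fun a => (hR a).choose) (fun b => (hR' b).choose) ?_ ?_, ?_⟩⟩
    · intro a
      show (hR' (hR a).choose).choose = a
      have h1 : f (inr a) = inr (hR a).choose := (hR a).choose_spec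
      have h2 := (hR' (hR a).choose).choose_spec
      have h3 : f.symm (inr (hR a).choose) = inr a := by
        rw [← h1]; exact f.symm_apply_apply _
      exact inr_injective (h2.symm.trans h3)
    · intro b
      show (hR (hR' b).choose).choose = b
      have h1 : f.symm (inr b) = inr (hR' b).choose := (hR' b).choose_spec
      have h2 := (hR (hR' b).choose).choose_spec
      have h3 : f (inr (hR' b).choose) = inr b := by
        rw [← h1]; exact f.apply_symm_apply _
      exact inr_injective (h2.symm.trans h3)
    · intro a a'
      simp only [Equiv.coe_fn_mk]
      have h1 := (hR a).choose_spec
      have h2 := (hR a').choose_spec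
      have key : (Γ ⊕g H).Adj (f (inr a)) (f (inr a')) ↔ (Γ ⊕g G).Adj (inr a) (inr a') :=
        f.map_adj_iff
      rw [h1, h2] at key
      exact key
  · -- Case B: f maps the Γ part into H
    push_neg at hc
    obtain ⟨vb, hvb⟩ := hc
    have hB0 : ∃ b₀, f (inl vb) = inr b₀ := by
      rcases hx : f (inl vb) with w | b
      · exact absurd hx (hvb w)
      · exact ⟨b, rfl⟩
    obtain ⟨b₀, hb₀⟩ := hB0
    have hB1 : ∀ v : V, ∃ b, f (inl v) = inr b := by
      intro v
      rcases hx : f (inl v) with w | b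
      · exfalso
        have hr'' : (Γ ⊕g H).Reachable (inl w) (inr b₀) := by
          rw [← hx, ← hb₀]
          exact (ext_reach hΓ v vb).map f.toHom
        exact absurd (sum_reach_isLeft hr'') (by simp)
      · exact ⟨b, rfl⟩
    have hB2 : ∀ w : V, ∃ a, f.symm (inl w) = inr a := by
      intro w
      rcases hx : f.symm (inl w) with v | a
      · exfalso
        obtain ⟨b, hb⟩ := hB1 v
        have : f (f.symm (inl w)) = inl w := f.apply_symm_apply _
        rw [hx, hb] at this
        simp at this
      · exact ⟨a, rfl⟩
    have hF : ∀ a : α, ∃ b, f (inr a) = inr b ∨ ∃ w, f (inr a) = inl w ∧ f (inl w) = inr b := by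
      intro a
      rcases hx : f (inr a) with w | b
      · obtain ⟨b, hb⟩ := hB1 w
        exact ⟨b, Or.inr ⟨w, rfl, hb⟩⟩
      · exact ⟨b, Or.inl rfl⟩
    have hBk : ∀ b : β, ∃ a, f.symm (inr b) = inr a ∨
        ∃ v, f.symm (inr b) = inl v ∧ f.symm (inl v) = inr a := by
      intro b
      rcases hx : f.symm (inr b) with v | a
      · obtain ⟨a, ha⟩ := hB2 v
        exact ⟨a, Or.inr ⟨v, rfl, ha⟩⟩
      · exact ⟨a, Or.inl rfl⟩
    have hBuniq : ∀ (b : β) (a a' : α),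
        (f.symm (inr b) = inr a ∨ ∃ v, f.symm (inr b) = inl v ∧ f.symm (inl v) = inr a) →
        (f.symm (inr b) = inr a' ∨ ∃ v, f.symm (inr b) = inl v ∧ f.symm (inl v) = inr a') →
        a = a' := by
      rintro b a a' (h1 | ⟨v, hv1, hv2⟩) (h2 | ⟨v', hv1', hv2'⟩)
      · exact inr_injective (h1.symm.trans h2)
      · rw [h1] at hv1'; simp at hv1'
      · rw [h2] at hv1; simp at hv1
      · rw [hv1] at hv1'
        obtain rfl := inl_injective hv1'
        exact inr_injective (hv2.symm.trans hv2')
    have hFuniq : ∀ (a : α) (b b' : β),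
        (f (inr a) = inr b ∨ ∃ w, f (inr a) = inl w ∧ f (inl w) = inr b) →
        (f (inr a) = inr b' ∨ ∃ w, f (inr a) = inl w ∧ f (inl w) = inr b') → b = b' := by
      rintro a b b' (h1 | ⟨w, hw1, hw2⟩) (h2 | ⟨w', hw1', hw2'⟩)
      · exact inr_injective (h1.symm.trans h2)
      · rw [h1] at hw1'; simp at hw1'
      · rw [h2] at hw1; simp at hw1
      · rw [hw1] at hw1'
        obtain rfl := inl_injective hw1'
        exact inr_injective (hw2.symm.trans hw2')
    have key : ∀ x y : V ⊕ α, ((Γ ⊕g H).Adj (f x) (f y) ↔ (Γ ⊕g G).Adj x y) :=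
      fun x y => f.map_adj_iff
    refine ⟨⟨Equiv.mk (fun a => (hF a).choose) (fun b => (hBk b).choose) ?_ ?_, ?_⟩⟩
    · intro a
      show (hBk (hF a).choose).choose = a
      apply hBuniq ((hF a).choose) _ a ((hBk (hF a).choose).choose_spec)
      rcases (hF a).choose_spec with h1 | ⟨w, hw1, hw2⟩
      · left; rw [← h1]; exact f.symm_apply_apply _
      · exact Or.inr ⟨w, by rw [← hw2]; exact f.symm_apply_apply _,
          by rw [← hw1]; exact f.symm_apply_apply _⟩
    · intro b
      show (hF (hBk b).choose).choose = b
      apply hFuniq ((hBk b).choose) _ b ((hF (hBk b).choose).choose_spec)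
      rcases (hBk b).choose_spec with h1 | ⟨v, hv1, hv2⟩
      · left; rw [← h1]; exact f.apply_symm_apply _
      · exact Or.inr ⟨v, by rw [← hv2]; exact f.apply_symm_apply _,
          by rw [← hv1]; exact f.apply_symm_apply _⟩
    · intro a a'
      simp only [Equiv.coe_fn_mk]
      rcases (hF a).choose_spec with h1 | ⟨w, hw1, hw2⟩ <;>
        rcases (hF a').choose_spec with h2 | ⟨w', hw1', hw2'⟩
      · have k := key (inr a) (inr a')
        rw [h1, h2] at k
        exact k
      · -- a ↦ inr, a' ↦ inl w'
        have k1 := key (inr a) (inl w')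
        rw [h1, hw2'] at k1
        have k2 := key (inr a) (inr a')
        rw [h1, hw1'] at k2
        constructor
        · intro hadj
          exact absurd (k1.mp hadj) (by simp [SimpleGraph.sum_adj])
        · intro hadj
          exact absurd (k2.mpr hadj) (by simp [SimpleGraph.sum_adj])
      · -- a ↦ inl w, a' ↦ inr
        have k1 := key (inl w) (inr a')
        rw [hw2, h2] at k1
        have k2 := key (inr a) (inr a')
        rw [hw1, h2] at k2
        constructor
        · intro hadj
          exact absurd (k1.mp hadj) (by simp [SimpleGraph.sum_adj])
        · intro hadj
          exact absurd (k2.mpr hadj) (by simp [SimpleGraph.sum_adj])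
      · -- both through Γ
        have k1 := key (inl w) (inl w')
        rw [hw2, hw2'] at k1
        have k2 := key (inr a) (inr a')
        rw [hw1, hw1'] at k2
        exact k1.trans k2
end

section
/- Let A and B be linear orders. If the lexicographic sum ℚ +ˡ 2 +ˡ A is order isomorphic to ℚ +ˡ 2 +ˡ B, where 2 denotes a two-element linear order, then A is order isomorphic to B. -/
open Sum

section Aux

variable {C : Type*} [LinearOrder C]

/-- The "true" element of `ℚ ⊕ₗ Bool ⊕ₗ C`. -/
def lexTruePt (C : Type*) [LinearOrder C] : ℚ ⊕ₗ Bool ⊕ₗ C :=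
  toLex (inr (toLex (inl true)))

lemma isLeast_lexTruePt :
    IsLeast {x : ℚ ⊕ₗ Bool ⊕ₗ C | ∃ y, y ⋖ x} (lexTruePt C) := by
  constructor
  · refine ⟨toLex (inr (toLex (inl false))), ?_, ?_⟩
    · exact Sum.Lex.inr_lt_inr_iff.2 (Sum.Lex.inl_lt_inl_iff.2 (by decide))
    · intro z hz1 hz2
      obtain ⟨z, rfl⟩ := toLex.surjective z
      rcases z with q | w
      · exact Sum.Lex.not_inr_lt_inl hz1
      · obtain ⟨w, rfl⟩ := toLex.surjective w
        rcases w with b | c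
        · have h1 : false < b := Sum.Lex.inl_lt_inl_iff.1 (Sum.Lex.inr_lt_inr_iff.1 hz1)
          have h2 : b < true := Sum.Lex.inl_lt_inl_iff.1 (Sum.Lex.inr_lt_inr_iff.1 hz2)
          cases b
          · exact absurd h1 (by decide)
          · exact absurd h2 (by decide)
        · exact Sum.Lex.not_inr_lt_inl (Sum.Lex.inr_lt_inr_iff.1 hz2)
  · rintro x ⟨y, hy⟩
    by_contra hx
    push_neg at hx
    obtain ⟨x, rfl⟩ := toLex.surjective x
    rcases x with q | w
    · -- x in the ℚ part: its predecessor must be rational, density contradicts cover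
      obtain ⟨y, rfl⟩ := toLex.surjective y
      rcases y with p | w'
      · have hpq : p < q := Sum.Lex.inl_lt_inl_iff.1 hy.1
        obtain ⟨r, hr1, hr2⟩ := exists_between hpq
        exact hy.2 (Sum.Lex.inl_lt_inl_iff.2 hr1) (Sum.Lex.inl_lt_inl_iff.2 hr2)
      · exact Sum.Lex.not_inr_lt_inl hy.1
    · -- x in the right part, x < true point, so x = inr (inl false)
      have hw : w < toLex (inl true) := Sum.Lex.inr_lt_inr_iff.1 hx
      obtain ⟨w, rfl⟩ := toLex.surjective w
      rcases w with b | c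
      · have hb : b < true := Sum.Lex.inl_lt_inl_iff.1 hw
        have hbf : b = false := by cases b <;> simp_all
        subst hbf
        obtain ⟨y, rfl⟩ := toLex.surjective y
        rcases y with p | w'
        · exact hy.2 (Sum.Lex.inl_lt_inl_iff.2 (show p < p + 1 by linarith))
            (Sum.Lex.inl_lt_inr _ _)
        · obtain ⟨w', rfl⟩ := toLex.surjective w'
          rcases w' with b' | c'
          · have : b' < false := Sum.Lex.inl_lt_inl_iff.1 (Sum.Lex.inr_lt_inr_iff.1 hy.1)
            exact absurd this (by cases b' <;> decide)
          · exact Sum.Lex.not_inr_lt_inl (Sum.Lex.inr_lt_inr_iff.1 hy.1)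
      · exact Sum.Lex.not_inr_lt_inl hw

/-- `C` is order isomorphic to the elements above the true point. -/
noncomputable def ioiOrderIso (C : Type*) [LinearOrder C] :
    C ≃o Set.Ioi (lexTruePt C) := by
  refine StrictMono.orderIsoOfSurjective
    (fun c => ⟨toLex (inr (toLex (inr c))),
      Sum.Lex.inr_lt_inr_iff.2 (Sum.Lex.inl_lt_inr _ _)⟩) ?_ ?_
  · intro a b hab
    exact Sum.Lex.inr_lt_inr_iff.2 (Sum.Lex.inr_lt_inr_iff.2 hab)
  · rintro ⟨x, hx⟩
    obtain ⟨x, rfl⟩ := toLex.surjective x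
    rcases x with q | w
    · exact absurd hx Sum.Lex.not_inr_lt_inl
    · obtain ⟨w, rfl⟩ := toLex.surjective w
      rcases w with b | c
      · have : true < b := Sum.Lex.inl_lt_inl_iff.1 (Sum.Lex.inr_lt_inr_iff.1 hx)
        exact absurd this (by cases b <;> decide)
      · exact ⟨c, rfl⟩

end Aux

theorem iso_of_lexSum_rat_two_iso (A B : Type*) [LinearOrder A] [LinearOrder B]
    (h : Nonempty ((ℚ ⊕ₗ Bool ⊕ₗ A) ≃o (ℚ ⊕ₗ Bool ⊕ₗ B))) :
    Nonempty (A ≃o B) := by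
  obtain ⟨f⟩ := h
  have key : f (lexTruePt A) = lexTruePt B := by
    have hB : IsLeast {x : ℚ ⊕ₗ Bool ⊕ₗ B | ∃ y, y ⋖ x} (f (lexTruePt A)) := by
      obtain ⟨⟨y, hy⟩, hlb⟩ := isLeast_lexTruePt (C := A)
      constructor
      · exact ⟨f y, (apply_covBy_apply_iff f).2 hy⟩
      · rintro x ⟨z, hz⟩
        have : lexTruePt A ≤ f.symm x := by
          refine hlb ⟨f.symm z, ?_⟩
          have := (apply_covBy_apply_iff f.symm).2 hz
          simpa using this
        calc f (lexTruePt A) ≤ f (f.symm x) := f.monotone this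
          _ = x := f.apply_symm_apply x
    exact hB.unique (isLeast_lexTruePt (C := B))
  -- order iso between the Ioi's
  have hf : ∀ x : Set.Ioi (lexTruePt A), f x.1 ∈ Set.Ioi (lexTruePt B) := by
    rintro ⟨x, hx⟩
    simpa [Set.mem_Ioi, ← key] using f.strictMono hx
  refine ⟨(ioiOrderIso A).trans (OrderIso.trans ?_ (ioiOrderIso B).symm)⟩
  refine StrictMono.orderIsoOfSurjective (fun x => ⟨f x.1, hf x⟩) ?_ ?_
  · intro a b hab
    exact f.strictMono (Subtype.coe_lt_coe.2 hab)
  · rintro ⟨y, hy⟩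
    have hy' : lexTruePt A < f.symm y := by
      have := f.symm.strictMono hy
      simpa [← key] using this
    exact ⟨⟨f.symm y, hy'⟩, by simp⟩
end

section
/- Let L be a relational first-order language, let C be a collection of countable L-structures, and let M ∈ C be symmetrically indivisible. Assume: (a) every C ∈ C symmetrically embeds into M; (b) there is a binary operation + on C such that for all C₁, C₂ ∈ C, if M + C₁ ≅ M + C₂ then C₁ ≅ C₂; and (c) for all A, B ∈ C, both A and B symmetrically embed into A + B. Then for every C ∈ C the structure M + C is symmetrically indivisible, and the map C ↦ M + C is injective up to isomorphism (M + C₁ ≅ M + C₂ implies C₁ ≅ C₂). -/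
open FirstOrder

lemma IsSymmetricLEmb.comp {L : Language} {A B C : Type*} [L.Structure A] [L.Structure B]
    [L.Structure C] {e : A ↪[L] B} {f : B ↪[L] C}
    (he : IsSymmetricLEmb e) (hf : IsSymmetricLEmb f) : IsSymmetricLEmb (f.comp e) := by
  intro g
  obtain ⟨g', hg'⟩ := he g
  obtain ⟨g'', hg''⟩ := hf g'
  exact ⟨g'', fun x => by simp [Language.Embedding.comp_apply, hg'', hg']⟩

theorem symIndiv_of_class_with_operation {L : Language} [L.IsRelational]
    {ι : Type*} (St : ι → Type*) [∀ i, L.Structure (St i)] [∀ i, Countable (St i)]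
    (m : ι) (hm : SymIndiv L (St m))
    (plus : ι → ι → ι)
    (ha : ∀ i, ∃ e : St i ↪[L] St m, IsSymmetricLEmb e)
    (hb : ∀ i j, Nonempty (St (plus m i) ≃[L] St (plus m j)) →
        Nonempty (St i ≃[L] St j))
    (hc : ∀ i j, (∃ e : St i ↪[L] St (plus i j), IsSymmetricLEmb e) ∧
        (∃ e : St j ↪[L] St (plus i j), IsSymmetricLEmb e)) :
    (∀ i, SymIndiv L (St (plus m i))) ∧
      ∀ i j, Nonempty (St (plus m i) ≃[L] St (plus m j)) →
        Nonempty (St i ≃[L] St j) := by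
  refine ⟨fun i c => ?_, hb⟩
  obtain ⟨e0, he0⟩ := ha (plus m i)
  obtain ⟨e2, he2⟩ := (hc m i).1
  obtain ⟨e1, he1, hmono⟩ := hm (fun x => c (e2 x))
  refine ⟨(e2.comp e1).comp e0, IsSymmetricLEmb.comp he0 (IsSymmetricLEmb.comp he1 he2),
    fun x y => hmono (e0 x) (e0 y)⟩
end

section
/- Every automorphism σ of the graph Γ* fixes Γ pointwise: σ (inl v) = inl v for every vertex v of Γ. -/
/-- The graph `Γ*`: to the graph `Γ` with enumeration `g` we attach, for each `n`,
an `n`-element clique `K_n` all of whose vertices are joined to `g n`. -/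
def GammaStar {V : Type*} (Γ : SimpleGraph V) (g : ℕ → V) :
    SimpleGraph (V ⊕ (Σ n : ℕ, Fin n)) where
  Adj x y :=
    match x, y with
    | Sum.inl u, Sum.inl v => Γ.Adj u v
    | Sum.inr p, Sum.inr q => p.1 = q.1 ∧ p ≠ q
    | Sum.inl v, Sum.inr p => v = g p.1
    | Sum.inr p, Sum.inl v => v = g p.1
  symm := by
    constructor
    rintro (u | p) (v | q) h
    · exact Γ.adj_symm h
    · exact h
    · exact h
    · exact ⟨h.1.symm, h.2.symm⟩
  loopless := by
    constructor
    rintro (u | p) h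
    · exact Γ.irrefl h
    · exact h.2 rfl

/-!
Vertices of `Γ` have infinite degree in `Γ*` (by the extension property), whereas a vertex of
the attached clique `K_n` has exactly `n` neighbours. Hence an automorphism `σ` of `Γ*` preserves
`Γ` and maps each `K_n` onto itself, so it fixes `g n`, the only vertex of `Γ` adjacent to `K_n`,
for every `n ≥ 1`. The remaining vertex `g 0` is then fixed because `σ` permutes `Γ`.
-/

open Function

theorem HasExtProp.neighborSet_infinite {α : Type*} {G : SimpleGraph α} (hG : HasExtProp G)
    (v : α) : (G.neighborSet v).Infinite := by
  intro hfin
  obtain ⟨w, -, hw, hadj, -⟩ := hG {v} hfin.toFinset (by simp)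
  exact hw (by simpa using (hadj v (Finset.mem_singleton_self v)).symm)

namespace SimpleGraph.Iso

variable {α β : Type*} {G : SimpleGraph α} {H : SimpleGraph β}

theorem neighborSet_finite_iff (σ : G ≃g H) (v : α) :
    (H.neighborSet (σ v)).Finite ↔ (G.neighborSet v).Finite := by
  simp only [← Set.finite_coe_iff]
  exact (σ.mapNeighborSet v).finite_iff.symm

theorem card_neighborSet (σ : G ≃g H) (v : α) :
    Nat.card (H.neighborSet (σ v)) = Nat.card (G.neighborSet v) :=
  (Nat.card_congr (σ.mapNeighborSet v)).symm

end SimpleGraph.Iso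

namespace GammaStar

variable {V : Type*} {Γ : SimpleGraph V} {g : ℕ → V}

@[simp]
theorem adj_inr_inl {p : Σ n : ℕ, Fin n} {v : V} :
    (GammaStar Γ g).Adj (Sum.inr p) (Sum.inl v) ↔ v = g p.1 :=
  Iff.rfl

@[simp]
theorem adj_inl_inr {v : V} {p : Σ n : ℕ, Fin n} :
    (GammaStar Γ g).Adj (Sum.inl v) (Sum.inr p) ↔ v = g p.1 :=
  Iff.rfl

@[simp]
theorem adj_inr_inr {p q : Σ n : ℕ, Fin n} :
    (GammaStar Γ g).Adj (Sum.inr p) (Sum.inr q) ↔ p.1 = q.1 ∧ p ≠ q :=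
  Iff.rfl

theorem neighborSet_inl_infinite (hΓ : HasExtProp Γ) (v : V) :
    ((GammaStar Γ g).neighborSet (Sum.inl v)).Infinite := by
  refine ((hΓ.neighborSet_infinite v).image Sum.inl_injective.injOn).mono ?_
  rintro _ ⟨u, hu, rfl⟩
  exact hu

/-- In the enumeration of the neighbours of the vertex `i` of `K_n`, the slot `i` is `g n`. -/
def cliqueNeighbor (g : ℕ → V) (n : ℕ) (i j : Fin n) : V ⊕ (Σ n : ℕ, Fin n) :=
  if j = i then Sum.inl (g n) else Sum.inr ⟨n, j⟩

theorem cliqueNeighbor_injective (n : ℕ) (i : Fin n) : Injective (cliqueNeighbor g n i) := by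
  intro j k h
  unfold cliqueNeighbor at h
  split_ifs at h with hj hk hk
  · exact hj.trans hk.symm
  · simp_all

theorem neighborSet_inr (n : ℕ) (i : Fin n) :
    (GammaStar Γ g).neighborSet (Sum.inr ⟨n, i⟩) = Set.range (cliqueNeighbor g n i) := by
  ext x
  rcases x with v | ⟨m, k⟩
  · simp only [SimpleGraph.mem_neighborSet, adj_inr_inl, Set.mem_range, cliqueNeighbor]
    refine ⟨fun hv => ⟨i, by simp [hv]⟩, fun ⟨j, hj⟩ => ?_⟩
    split_ifs at hj
    exact (Sum.inl_injective hj).symm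
  · simp only [SimpleGraph.mem_neighborSet, adj_inr_inr, Set.mem_range, cliqueNeighbor]
    constructor
    · rintro ⟨rfl, hk⟩
      exact ⟨k, by rw [if_neg (by rintro rfl; exact hk rfl)]⟩
    · rintro ⟨j, hj⟩
      split_ifs at hj with hji
      cases hj
      exact ⟨rfl, by simpa [eq_comm] using hji⟩

theorem neighborSet_inr_finite (p : Σ n : ℕ, Fin n) :
    ((GammaStar Γ g).neighborSet (Sum.inr p)).Finite := by
  rw [neighborSet_inr]
  exact Set.finite_range _

theorem card_neighborSet_inr (p : Σ n : ℕ, Fin n) :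
    Nat.card ((GammaStar Γ g).neighborSet (Sum.inr p)) = p.1 := by
  rw [neighborSet_inr, Nat.card_range_of_injective (cliqueNeighbor_injective _ _), Nat.card_fin]

theorem neighborSet_infinite_iff (hΓ : HasExtProp Γ) (x : V ⊕ (Σ n : ℕ, Fin n)) :
    ((GammaStar Γ g).neighborSet x).Infinite ↔ x.isLeft := by
  rcases x with v | p
  · simpa using neighborSet_inl_infinite hΓ v
  · simpa using neighborSet_inr_finite p

variable (σ : GammaStar Γ g ≃g GammaStar Γ g)

theorem isLeft_aut_apply (hΓ : HasExtProp Γ) (x : V ⊕ (Σ n : ℕ, Fin n)) :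
    (σ x).isLeft = x.isLeft := by
  rw [Bool.eq_iff_iff, ← neighborSet_infinite_iff hΓ, ← neighborSet_infinite_iff hΓ,
    Set.Infinite, Set.Infinite, σ.neighborSet_finite_iff]

theorem exists_aut_apply_inl_eq (hΓ : HasExtProp Γ) (v : V) : ∃ w, σ (Sum.inl v) = Sum.inl w :=
  Sum.isLeft_iff.mp (by rw [isLeft_aut_apply σ hΓ]; rfl)

theorem exists_aut_apply_inr_eq (hΓ : HasExtProp Γ) (p : Σ n : ℕ, Fin n) :
    ∃ q, σ (Sum.inr p) = Sum.inr q :=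
  Sum.isRight_iff.mp (by rw [← Sum.isLeft_eq_false, isLeft_aut_apply σ hΓ]; rfl)

theorem aut_apply_inl_g_of_pos (hΓ : HasExtProp Γ) {n : ℕ} (hn : 0 < n) :
    σ (Sum.inl (g n)) = Sum.inl (g n) := by
  let p : Σ n : ℕ, Fin n := ⟨n, ⟨0, hn⟩⟩
  obtain ⟨w, hw⟩ := exists_aut_apply_inl_eq σ hΓ (g n)
  obtain ⟨q, hq⟩ := exists_aut_apply_inr_eq σ hΓ p
  have hqn : q.1 = n := by
    simpa only [hq, card_neighborSet_inr] using σ.card_neighborSet (Sum.inr p)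
  have hadj : (GammaStar Γ g).Adj (σ (Sum.inl (g n))) (σ (Sum.inr p)) :=
    σ.map_adj_iff.mpr (adj_inl_inr.mpr rfl)
  rw [hw, hq, adj_inl_inr, hqn] at hadj
  rw [hw, hadj]

end GammaStar

theorem gammaStar_aut_fixes_gamma_general {V : Type*}
    (Γ : SimpleGraph V) (hΓ : HasExtProp Γ) (g : ℕ → V) (hg : Function.Bijective g)
    (σ : GammaStar Γ g ≃g GammaStar Γ g) :
    ∀ v : V, σ (Sum.inl v) = Sum.inl v := by
  have fix_ne : ∀ v, v ≠ g 0 → σ (Sum.inl v) = Sum.inl v := by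
    intro v hv
    obtain ⟨n, rfl⟩ := hg.surjective v
    exact GammaStar.aut_apply_inl_g_of_pos σ hΓ
      (Nat.pos_of_ne_zero (by rintro rfl; exact hv rfl))
  intro v
  by_cases hv : v = g 0
  · obtain ⟨w, hw⟩ := GammaStar.exists_aut_apply_inl_eq σ hΓ v
    by_cases hw0 : w = g 0
    · rw [hw, hw0, hv]
    · have hfix := fix_ne w hw0
      rw [← hw] at hfix
      exact σ.injective hfix
  · exact fix_ne v hv

theorem gammaStar_aut_fixes_gamma {V : Type*} [Countable V]
    (Γ : SimpleGraph V) (hΓ : HasExtProp Γ) (g : ℕ → V) (hg : Function.Bijective g)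
    (σ : GammaStar Γ g ≃g GammaStar Γ g) :
    ∀ v : V, σ (Sum.inl v) = Sum.inl v :=
  gammaStar_aut_fixes_gamma_general Γ hΓ g hg σ
end

section
/- Let L be a relational first-order language, let U be a countably infinite ultrahomogeneous L-structure with the pigeonhole property, and let A be a countably infinite L-structure such that every finite substructure of A embeds into U (Age(A) ⊆ Age(U)). Let u : ℕ → U and a : ℕ → A be bijections. Then there is an L-embedding e : A ↪ U such that the map n ↦ u⁻¹(e (a n)) is strictly increasing. -/
open FirstOrder

def HasPigeonhole (L : Language) (U : Type*) [L.Structure U] : Prop :=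
  ∀ S : Set U, (∃ f : U ↪[L] U, Set.range f = S) ∨ (∃ f : U ↪[L] U, Set.range f = Sᶜ)

universe u

/-!
The embedding is built one point at a time along the enumeration `a`. Once `a 0, …, a (n - 1)` have
been placed at `w 0, …, w (n - 1)`, ultrahomogeneity and `Age(A) ⊆ Age(U)` give a place for `a n`.
By the pigeonhole property the set `V` of such places is infinite: otherwise `Vᶜ` is the image of an
embedding `f : U ↪ U` and contains every `w i`; pulling the partial embedding back along `f`,
extending it and pushing it forward gives a place in `V ∩ f(U) = ∅`. Hence `w n` can be chosen with
`u⁻¹(w n)` above every `u⁻¹(w i)`, `i < n`.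
-/

theorem exists_seq_of_forall_exists_update {β : Type*} {P : ℕ → (ℕ → β) → Prop}
    (hP : ∀ n v w, (∀ i < n, v i = w i) → P n v → P n w) (h₀ : ∃ w, P 0 w)
    (hstep : ∀ n w, P n w → ∃ x, P (n + 1) (Function.update w n x)) :
    ∃ w, ∀ n, P n w := by
  obtain ⟨w₀, hw₀⟩ := h₀
  have : Nonempty β := ⟨w₀ 0⟩
  choose! next hnext using hstep
  let W : ℕ → ℕ → β := fun n => Nat.rec w₀ (fun m Wm => Function.update Wm m (next m Wm)) n
  have hW : ∀ n, P n (W n) := fun n => by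
    induction n with
    | zero => exact hw₀
    | succ m ih => exact hnext m (W m) ih
  have hcoh : ∀ n, ∀ i < n, W n i = W (i + 1) i := by
    intro n
    induction n with
    | zero => intro i hi; omega
    | succ m ih =>
      intro i hi
      rcases Nat.lt_succ_iff_lt_or_eq.1 hi with hi | rfl
      · rw [← ih i hi]
        exact Function.update_of_ne hi.ne _ _
      · rfl
  exact ⟨fun i => W (i + 1) i, fun n => hP n (W n) _ (hcoh n) (hW n)⟩

namespace FirstOrder.Language

open Structure Substructure Set Function

variable {L : Language} {M N P : Type*} [L.Structure M] [L.Structure N] [L.Structure P]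

/-- In a relational language this says that `v 0, …, v (n - 1)` and `w 0, …, w (n - 1)` have the
same atomic type, i.e. `v i ↦ w i` is a well-defined isomorphism of the induced substructures. -/
def SameAtomicType (L : Language) [L.Structure M] [L.Structure N] (n : ℕ) (v : ℕ → M)
    (w : ℕ → N) : Prop :=
  (∀ i < n, ∀ j < n, v i = v j ↔ w i = w j) ∧
  ∀ k (R : L.Relations k) (t : Fin k → ℕ), (∀ m, t m < n) → (RelMap R (v ∘ t) ↔ RelMap R (w ∘ t))

namespace SameAtomicType

variable {n : ℕ} {v : ℕ → M} {w : ℕ → N} {x : ℕ → P}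

theorem refl (n : ℕ) (v : ℕ → M) : SameAtomicType L n v v :=
  ⟨fun _ _ _ _ => Iff.rfl, fun _ _ _ _ => Iff.rfl⟩

theorem symm (h : SameAtomicType L n v w) : SameAtomicType L n w v :=
  ⟨fun i hi j hj => (h.1 i hi j hj).symm, fun k R t ht => (h.2 k R t ht).symm⟩

theorem trans (h : SameAtomicType L n v w) (h' : SameAtomicType L n w x) :
    SameAtomicType L n v x :=
  ⟨fun i hi j hj => (h.1 i hi j hj).trans (h'.1 i hi j hj),
    fun k R t ht => (h.2 k R t ht).trans (h'.2 k R t ht)⟩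

theorem mono {m : ℕ} (h : SameAtomicType L n v w) (hmn : m ≤ n) : SameAtomicType L m v w :=
  ⟨fun i hi j hj => h.1 i (hi.trans_le hmn) j (hj.trans_le hmn),
    fun k R t ht => h.2 k R t fun m => (ht m).trans_le hmn⟩

theorem congr_right {w' : ℕ → N} (h : SameAtomicType L n v w) (hww' : ∀ i < n, w i = w' i) :
    SameAtomicType L n v w' := by
  refine ⟨fun i hi j hj => ?_, fun k R t ht => ?_⟩
  · rw [← hww' i hi, ← hww' j hj]
    exact h.1 i hi j hj
  · have : w' ∘ t = w ∘ t := funext fun m => (hww' _ (ht m)).symm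
    rw [this]
    exact h.2 k R t ht

end SameAtomicType

theorem sameAtomicType_comp_embedding_iff (f : N ↪[L] P) {n : ℕ} {v : ℕ → M} {w : ℕ → N} :
    SameAtomicType L n v (f ∘ w) ↔ SameAtomicType L n v w := by
  simp only [SameAtomicType, comp_apply, f.injective.eq_iff, comp_assoc, f.map_rel]

theorem Embedding.sameAtomicType (f : M ↪[L] N) (n : ℕ) (v : ℕ → M) :
    SameAtomicType L n v (f ∘ v) :=
  (sameAtomicType_comp_embedding_iff f).2 (.refl n v)

section Relational

variable [L.IsRelational]

theorem SameAtomicType.exists_embedding {n : ℕ} {v : ℕ → M} {w : ℕ → N}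
    (h : SameAtomicType L n v w) :
    ∃ f : closure L (v '' Iio n) ↪[L] N,
      ∀ i (hi : i < n), f ⟨v i, subset_closure ⟨i, hi, rfl⟩⟩ = w i := by
  have hmem (s : closure L (v '' Iio n)) : ∃ i < n, v i = s :=
    (mem_closure_iff_of_isRelational L (v '' Iio n) _).1 s.2
  choose idx hidx hv using hmem
  refine ⟨⟨⟨fun s => w (idx s), fun s s' hss' => ?_⟩, isEmptyElim, fun R s => ?_⟩,
    fun i hi => (h.1 _ (hidx _) i hi).1 (hv _)⟩
  · exact Subtype.ext <| by rw [← hv s, ← hv s', (h.1 _ (hidx s) _ (hidx s')).2 hss']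
  · have hs : Subtype.val ∘ s = v ∘ idx ∘ s := funext fun m => (hv (s m)).symm
    exact (h.2 _ R (idx ∘ s) fun m => hidx _).symm.trans (by rw [← hs]; rfl)

theorem IsUltrahomogeneous.exists_equiv_of_sameAtomicType (hM : L.IsUltrahomogeneous M)
    {n : ℕ} {v w : ℕ → M} (h : SameAtomicType L n v w) :
    ∃ g : M ≃[L] M, ∀ i < n, g (v i) = w i := by
  obtain ⟨f, hf⟩ := h.exists_embedding
  obtain ⟨g, hg⟩ := hM _ (fg_closure ((finite_Iio n).image v)) f
  exact ⟨g, fun i hi => (DFunLike.congr_fun hg ⟨v i, subset_closure ⟨i, hi, rfl⟩⟩).symm.trans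
    (hf i hi)⟩

theorem exists_embedding_of_forall_sameAtomicType {a : ℕ ≃ M} {w : ℕ → N}
    (h : ∀ n, SameAtomicType L n a w) : ∃ e : M ↪[L] N, ∀ n, e (a n) = w n := by
  have hbound {k : ℕ} (t : Fin k → ℕ) : ∃ n, ∀ m, t m < n := by
    obtain ⟨n, hn⟩ := (finite_range t).bddAbove
    exact ⟨n + 1, fun m => Nat.lt_succ_of_le (hn ⟨m, rfl⟩)⟩
  refine ⟨⟨⟨w ∘ a.symm, fun x y hxy => ?_⟩, isEmptyElim, fun R x => ?_⟩,
    fun n => congrArg w (a.symm_apply_apply n)⟩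
  · obtain ⟨n, hn⟩ := hbound ![a.symm x, a.symm y]
    simpa using ((h n).1 _ (hn 0) _ (hn 1)).2 hxy
  · obtain ⟨n, hn⟩ := hbound (a.symm ∘ x)
    simpa [← comp_assoc] using ((h n).2 _ R (a.symm ∘ x) hn).symm

end Relational

section Age

variable {M N : Type u} [L.Structure M] [L.Structure N]

theorem exists_sameAtomicType_of_age_subset (hage : L.age M ⊆ L.age N) (v : ℕ → M) (n : ℕ) :
    ∃ w : ℕ → N, SameAtomicType L n v w := by
  let S := closure L (v '' Iic n)
  obtain ⟨-, ⟨j⟩⟩ := hage (age.fg_substructure (fg_closure ((finite_Iic n).image v)))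
  let v' : ℕ → S := fun i => ⟨v (min i n), subset_closure ⟨min i n, min_le_right i n, rfl⟩⟩
  have hvv' : SameAtomicType L n v (S.subtype ∘ v') :=
    (SameAtomicType.refl n v).congr_right fun i hi => by simp [v', hi.le]
  exact ⟨j ∘ v', ((sameAtomicType_comp_embedding_iff _).1 hvv').trans (j.sameAtomicType n v')⟩

theorem exists_update_sameAtomicType [L.IsRelational] (hN : L.IsUltrahomogeneous N)
    (hage : L.age M ⊆ L.age N)
    {n : ℕ} {v : ℕ → M} {w : ℕ → N} (hw : SameAtomicType L n v w) :
    ∃ x, SameAtomicType L (n + 1) v (update w n x) := by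
  obtain ⟨w', hw'⟩ := exists_sameAtomicType_of_age_subset hage v (n + 1)
  obtain ⟨g, hg⟩ := hN.exists_equiv_of_sameAtomicType ((hw'.mono n.le_succ).symm.trans hw)
  refine ⟨g (w' n), (hw'.trans (g.toEmbedding.sameAtomicType _ w')).congr_right fun i hi => ?_⟩
  rcases Nat.lt_succ_iff_lt_or_eq.1 hi with hi | rfl
  · rw [update_of_ne hi.ne]
    exact hg i hi
  · rw [update_self]
    rfl

theorem _root_.HasPigeonhole.infinite_setOf_sameAtomicType_update [L.IsRelational] [Infinite N]
    (hN : L.IsUltrahomogeneous N) (hP : HasPigeonhole L N) (hage : L.age M ⊆ L.age N)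
    {n : ℕ} {v : ℕ → M} (hv : Injective v) {w : ℕ → N} (hw : SameAtomicType L n v w) :
    {x | SameAtomicType L (n + 1) v (update w n x)}.Infinite := by
  set V := {x | SameAtomicType L (n + 1) v (update w n x)}
  rcases hP V with ⟨f, hf⟩ | ⟨f, hf⟩
  · exact hf ▸ infinite_range_of_injective f.injective
  have hw_range : ∀ i < n, w i ∈ range f := by
    intro i hi
    rw [hf]
    intro hwi
    have := (hwi.1 i (hi.trans n.lt_succ_self) n n.lt_succ_self).2
    rw [update_of_ne hi.ne, update_self] at this
    exact hi.ne (hv (this rfl))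
  have hw₀ : SameAtomicType L n v (invFun f ∘ w) :=
    (sameAtomicType_comp_embedding_iff f).1 <| hw.congr_right fun i hi =>
      (invFun_eq (hw_range i hi)).symm
  obtain ⟨z, hz⟩ := exists_update_sameAtomicType hN hage hw₀
  have hfz : f z ∈ V := by
    refine ((sameAtomicType_comp_embedding_iff f).2 hz).congr_right fun i hi => ?_
    rw [comp_update]
    rcases Nat.lt_succ_iff_lt_or_eq.1 hi with hi | rfl
    · rw [update_of_ne hi.ne, update_of_ne hi.ne]
      exact invFun_eq (hw_range i hi)
    · rw [update_self, update_self]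
  exact (hf.le ⟨z, rfl⟩ hfz).elim

theorem exists_seq_sameAtomicType_strictMono [L.IsRelational] [Infinite N]
    (hN : L.IsUltrahomogeneous N) (hP : HasPigeonhole L N) (hage : L.age M ⊆ L.age N)
    {v : ℕ → M} (hv : Injective v) {r : N → ℕ} (hr : Injective r) :
    ∃ w : ℕ → N, (∀ n, SameAtomicType L n v w) ∧ StrictMono (r ∘ w) := by
  refine (exists_seq_of_forall_exists_update
    (P := fun n w => SameAtomicType L n v w ∧ ∀ j < n, ∀ i < j, r (w i) < r (w j))
    ?congr ?base ?step).imp fun w hw =>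
      ⟨fun n => (hw n).1, fun i j hij => (hw (j + 1)).2 j j.lt_succ_self i hij⟩
  case congr =>
    rintro n w w' hww' ⟨hw, hmono⟩
    refine ⟨hw.congr_right hww', fun j hj i hij => ?_⟩
    rw [← hww' i (hij.trans hj), ← hww' j hj]
    exact hmono j hj i hij
  case base =>
    obtain ⟨w, hw⟩ := exists_sameAtomicType_of_age_subset hage v 0
    exact ⟨w, hw, fun j hj => absurd hj j.not_lt_zero⟩
  case step =>
    rintro n w ⟨hw, hmono⟩
    obtain ⟨-, ⟨x, hxV, rfl⟩, hx⟩ :=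
      ((hP.infinite_setOf_sameAtomicType_update hN hage hv hw).image hr.injOn).exists_gt
        ((Finset.range n).sup (r ∘ w))
    refine ⟨x, hxV, fun j hj i hij => ?_⟩
    rcases Nat.lt_succ_iff_lt_or_eq.1 hj with hj | rfl
    · rw [update_of_ne (hij.trans hj).ne, update_of_ne hj.ne]
      exact hmono j hj i hij
    · rw [update_of_ne hij.ne, update_self]
      exact (Finset.le_sup (f := r ∘ w) (Finset.mem_range.2 hij)).trans_lt hx

end Age

end FirstOrder.Language

theorem exists_enumeration_respecting_embedding_general {L : Language} [L.IsRelational]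
    {U A : Type u} [L.Structure U] [L.Structure A]
    [Infinite U]
    (hU : L.IsUltrahomogeneous U) (hP : HasPigeonhole L U)
    (hage : L.age A ⊆ L.age U)
    (u : ℕ ≃ U) (a : ℕ ≃ A) :
    ∃ e : A ↪[L] U, StrictMono (fun n => u.symm (e (a n))) := by
  obtain ⟨w, hw, hmono⟩ :=
    Language.exists_seq_sameAtomicType_strictMono hU hP hage a.injective u.symm.injective
  obtain ⟨e, he⟩ := Language.exists_embedding_of_forall_sameAtomicType hw
  exact ⟨e, fun i j hij => by simpa only [he, Function.comp_apply] using hmono hij⟩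

theorem exists_enumeration_respecting_embedding {L : Language} [L.IsRelational]
    {U A : Type u} [L.Structure U] [L.Structure A]
    [Countable U] [Infinite U] [Countable A] [Infinite A]
    (hU : L.IsUltrahomogeneous U) (hP : HasPigeonhole L U)
    (hage : L.age A ⊆ L.age U)
    (u : ℕ ≃ U) (a : ℕ ≃ A) :
    ∃ e : A ↪[L] U, StrictMono (fun n => u.symm (e (a n))) :=
  exists_enumeration_respecting_embedding_general hU hP hage u a
end
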